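/- arXiv:1112.2471 — 6 statements merged into one kernel-verified Lean document; each statement's English description precedes it below -/
import Mathlib

section
/- If the basic set B ⊆ S_p^{Z_{2×2}} is such that for every n ≥ 2 both the horizontal transition matrix H_n(B) and the vertical transition matrix V_n(B) have no zero rows and no zero columns, then B is rectangle-extendable: every B-admissible pattern on an m×n rectangle (m,n ≥ 2) extends to a global configuration in Σ(B). -/
open scoped Classical

/-- A `2×2` pattern over `p` symbols; first argument is the horizontal
coordinate, second the vertical coordinate. -/
abbrev Pat (p : ℕ) := Fin 2 → Fin 2 → Fin p

/-- The `2×2` block of the configuration `W` with lower-left corner `v`. -/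
def blk {p : ℕ} (W : ℤ × ℤ → Fin p) (v : ℤ × ℤ) : Pat p :=
  fun a b => W (v.1 + (a : ℕ), v.2 + (b : ℕ))

/-- The `2×2` square lattice `Z_{2×2}(v)` with lower-left corner `v`. -/
def sqr (v : ℤ × ℤ) : Set (ℤ × ℤ) :=
  {x | ∃ a b : Fin 2, x = (v.1 + (a : ℕ), v.2 + (b : ℕ))}

/-- `U` is a `B`-admissible pattern on the region `R`: every `2×2` block fully
contained in `R` carries a pattern of `B`. -/
def AdmOn {p : ℕ} (B : Set (Pat p)) (R : Set (ℤ × ℤ)) (U : ℤ × ℤ → Fin p) : Prop :=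
  ∀ v : ℤ × ℤ, sqr v ⊆ R → blk U v ∈ B

/-- `W` is a global `B`-admissible configuration, i.e. `W ∈ Σ(B)`. -/
def Glob {p : ℕ} (B : Set (Pat p)) (W : ℤ × ℤ → Fin p) : Prop :=
  ∀ v : ℤ × ℤ, blk W v ∈ B

/-- The crisscross lattice `Z₊`. -/
def Zplus : Set (ℤ × ℤ) :=
  sqr (0, 0) ∪ sqr (1, 0) ∪ sqr (-1, 0) ∪ sqr (0, 1) ∪ sqr (0, -1)

/-- The rectangular lattice `Z_{m×n}(v)`. -/
def rect (m n : ℕ) (v : ℤ × ℤ) : Set (ℤ × ℤ) :=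
  {x | ∃ a b : ℕ, a < m ∧ b < n ∧ x = (v.1 + a, v.2 + b)}

/-- Euclidean distance between two lattice points of `ℤ²`. -/
noncomputable def eDist (x y : ℤ × ℤ) : ℝ :=
  Real.sqrt (((x.1 - y.1 : ℤ) : ℝ) ^ 2 + ((x.2 - y.2 : ℤ) : ℝ) ^ 2)

/-- `B`-admissibility of the `2×n` horizontal strip whose left column is `c`
and right column is `d`. -/
def HAdm {p : ℕ} (B : Set (Pat p)) (n : ℕ) (c d : Fin n → Fin p) : Prop :=
  ∀ k k' : Fin n, (k' : ℕ) = (k : ℕ) + 1 →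
    (fun a b : Fin 2 => (if a = 0 then c else d) (if b = 0 then k else k')) ∈ B

/-- `B`-admissibility of the `n×2` vertical strip whose bottom row is `r` and
top row is `s`. -/
def VAdm {p : ℕ} (B : Set (Pat p)) (n : ℕ) (r s : Fin n → Fin p) : Prop :=
  ∀ k k' : Fin n, (k' : ℕ) = (k : ℕ) + 1 →
    (fun a b : Fin 2 => (if b = 0 then r else s) (if a = 0 then k else k')) ∈ B

/-- The horizontal transition matrix `H_n(B)`, indexed by columns of height
`n`. -/
noncomputable def Hmat {p : ℕ} (B : Set (Pat p)) (n : ℕ) :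
    Matrix (Fin n → Fin p) (Fin n → Fin p) ℕ :=
  fun c d => if HAdm B n c d then 1 else 0

/-- The vertical transition matrix `V_n(B)`, indexed by rows of width `n`. -/
noncomputable def Vmat {p : ℕ} (B : Set (Pat p)) (n : ℕ) :
    Matrix (Fin n → Fin p) (Fin n → Fin p) ℕ :=
  fun r s => if VAdm B n r s then 1 else 0

/-- A matrix has no zero row and no zero column. -/
def NonCompressible {ι : Type*} (A : Matrix ι ι ℕ) : Prop :=
  (∀ i, ∃ j, A i j ≠ 0) ∧ (∀ j, ∃ i, A i j ≠ 0)

/-- The saturated matrix `E(A)`. -/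
noncomputable def Esat {ι : Type*} [Fintype ι] (A : Matrix ι ι ℕ) : Matrix ι ι ℕ :=
  fun i j => if (∀ k, A i k = 0) ∨ (∀ k, A k j = 0) then 0 else 1

/-- `A` is primitive: some power of `A` (and all higher powers) dominates the
saturated matrix `E(A)` entrywise. -/
def Primitive {ι : Type*} [Fintype ι] [DecidableEq ι] (A : Matrix ι ι ℕ) : Prop :=
  ∃ n₀ : ℕ, 1 ≤ n₀ ∧ ∀ m, n₀ ≤ m → ∀ i j, Esat A i j ≤ (A ^ m) i j

/-- `B` is rectangle-extendable: every `B`-admissible pattern on an `m×n`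
rectangle (`m, n ≥ 2`) extends to a global configuration in `Σ(B)`. -/
def RectExt {p : ℕ} (B : Set (Pat p)) : Prop :=
  ∀ m n : ℕ, 2 ≤ m → 2 ≤ n → ∀ U : ℤ × ℤ → Fin p,
    AdmOn B (rect m n (0, 0)) U →
    ∃ W, Glob B W ∧ ∀ x ∈ rect m n (0, 0), W x = U x

theorem compact_path {p : ℕ} (P : ℤ → Fin p → Fin p → Prop)
    (h : ∀ N : ℕ, ∃ s : ℤ → Fin p, ∀ i : ℤ, i.natAbs ≤ N → P i (s i) (s (i + 1))) :
    ∃ s : ℤ → Fin p, ∀ i : ℤ, P i (s i) (s (i + 1)) := by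
  set C : ℕ → Set (ℤ → Fin p) :=
    fun N => {s | ∀ i : ℤ, i.natAbs ≤ N → P i (s i) (s (i + 1))} with hC
  have hcl : ∀ N, IsClosed (C N) := by
    intro N
    have : C N = ⋂ i : ℤ, {s : ℤ → Fin p | i.natAbs ≤ N → P i (s i) (s (i + 1))} := by
      ext s; simp [hC]
    rw [this]
    refine isClosed_iInter fun i => ?_
    by_cases hi : i.natAbs ≤ N
    · have : {s : ℤ → Fin p | i.natAbs ≤ N → P i (s i) (s (i + 1))}
          = (fun s : ℤ → Fin p => (s i, s (i + 1))) ⁻¹' {q | P i q.1 q.2} := by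
        ext s; simp [hi]
      rw [this]
      exact (isClosed_discrete _).preimage ((continuous_apply i).prodMk (continuous_apply (i+1)))
    · have : {s : ℤ → Fin p | i.natAbs ≤ N → P i (s i) (s (i + 1))} = Set.univ := by
        ext s; simp [hi]
      rw [this]; exact isClosed_univ
  have hne : ∀ N, (C N).Nonempty := fun N => (h N).imp (fun s hs => hs)
  have hdec : ∀ N, C (N + 1) ⊆ C N := fun N s hs i hi => hs i (hi.trans (Nat.le_succ N))
  obtain ⟨s, hs⟩ := IsCompact.nonempty_iInter_of_sequence_nonempty_isCompact_isClosed C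
    hdec hne ((hcl 0).isCompact) hcl
  exact ⟨s, fun i => (Set.mem_iInter.mp hs i.natAbs) i le_rfl⟩

theorem exists_up {p : ℕ} (B : Set (Pat p))
    (hV : ∀ k, 2 ≤ k → ∀ r : Fin k → Fin p, ∃ s, VAdm B k r s) (r : ℤ → Fin p) :
    ∃ s : ℤ → Fin p, ∀ i : ℤ,
      (fun a b : Fin 2 => if b = 0 then r (i + ((a : Fin 2) : ℕ)) else s (i + ((a : Fin 2) : ℕ))) ∈ B := by
  have hstep : ∀ N : ℕ, ∃ s : ℤ → Fin p, ∀ i : ℤ, i.natAbs ≤ N →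
      ((fun a b : Fin 2 =>
        if b = 0 then r (i + ((a : Fin 2) : ℕ)) else if a = 0 then s i else s (i+1)) ∈ B) := by
    intro N
    obtain ⟨s', hs'⟩ := hV (2*N+2) (by omega) (fun t => r ((t : ℤ) - N))
    set s : ℤ → Fin p := fun j =>
      if hc : 0 ≤ j + N ∧ j + N < ((2*N+2 : ℕ) : ℤ) then s' ⟨(j + N).toNat, by omega⟩
      else s' ⟨0, by omega⟩ with hsdef
    refine ⟨s, fun i hi => ?_⟩
    have h0 : 0 ≤ i + N := by omega
    have h0' : i + N < ((2*N+2 : ℕ) : ℤ) := by push_cast; omega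
    have h1 : 0 ≤ (i+1) + N := by omega
    have h1' : (i+1) + N < ((2*N+2 : ℕ) : ℤ) := by push_cast; omega
    set t : Fin (2*N+2) := ⟨(i + N).toNat, by omega⟩ with ht
    set t' : Fin (2*N+2) := ⟨(i + N).toNat + 1, by omega⟩ with ht'
    have hmem := hs' t t' rfl
    have hc0 : 0 ≤ i + (N : ℤ) ∧ i + (N : ℤ) < ((2*N+2 : ℕ) : ℤ) := ⟨h0, h0'⟩
    have hc1 : 0 ≤ (i+1) + (N : ℤ) ∧ (i+1) + (N : ℤ) < ((2*N+2 : ℕ) : ℤ) := ⟨h1, h1'⟩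
    have hsi : s i = s' t := by simp only [hsdef]; rw [dif_pos hc0]
    have hsi1 : s (i+1) = s' t' := by
      simp only [hsdef]; rw [dif_pos hc1]
      congr 1; apply Fin.ext; simp [ht']; omega
    have heq : (fun a b : Fin 2 =>
        (if b = 0 then (fun u : Fin (2*N+2) => r ((u : ℤ) - N)) else s') (if a = 0 then t else t'))
        = (fun a b : Fin 2 => if b = 0 then r (i + ((a : Fin 2) : ℕ)) else
            if a = 0 then s i else s (i+1)) := by
      funext a b
      fin_cases a <;> fin_cases b <;> simp [hsi, hsi1, ht, ht'] <;> congr 1 <;> omega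
    rw [heq] at hmem
    exact hmem
  obtain ⟨s, hs⟩ := compact_path
    (fun i x y => (fun a b : Fin 2 =>
      if b = 0 then r (i + ((a : Fin 2) : ℕ)) else if a = 0 then x else y) ∈ B) hstep
  refine ⟨s, fun i => ?_⟩
  have heq : (fun a b : Fin 2 =>
      if b = 0 then r (i + ((a : Fin 2) : ℕ)) else s (i + ((a : Fin 2) : ℕ)))
      = (fun a b : Fin 2 =>
      if b = 0 then r (i + ((a : Fin 2) : ℕ)) else if a = 0 then s i else s (i + 1)) := by
    funext a b
    fin_cases a <;> fin_cases b <;> simp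
  rw [heq]; exact hs i

theorem exists_down {p : ℕ} (B : Set (Pat p))
    (hV : ∀ k, 2 ≤ k → ∀ s : Fin k → Fin p, ∃ r, VAdm B k r s) (s : ℤ → Fin p) :
    ∃ r : ℤ → Fin p, ∀ i : ℤ,
      (fun a b : Fin 2 => if b = 0 then r (i + ((a : Fin 2) : ℕ)) else s (i + ((a : Fin 2) : ℕ))) ∈ B := by
  have hstep : ∀ N : ℕ, ∃ r : ℤ → Fin p, ∀ i : ℤ, i.natAbs ≤ N →
      ((fun a b : Fin 2 =>
        if b = 0 then (if a = 0 then r i else r (i+1)) else s (i + ((a : Fin 2) : ℕ))) ∈ B) := by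
    intro N
    obtain ⟨r', hr'⟩ := hV (2*N+2) (by omega) (fun t => s ((t : ℤ) - N))
    set r : ℤ → Fin p := fun j =>
      if hc : 0 ≤ j + N ∧ j + N < ((2*N+2 : ℕ) : ℤ) then r' ⟨(j + N).toNat, by omega⟩
      else r' ⟨0, by omega⟩ with hrdef
    refine ⟨r, fun i hi => ?_⟩
    have h0 : 0 ≤ i + N := by omega
    have h0' : i + N < ((2*N+2 : ℕ) : ℤ) := by push_cast; omega
    have h1 : 0 ≤ (i+1) + N := by omega
    have h1' : (i+1) + N < ((2*N+2 : ℕ) : ℤ) := by push_cast; omega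
    set t : Fin (2*N+2) := ⟨(i + N).toNat, by omega⟩ with ht
    set t' : Fin (2*N+2) := ⟨(i + N).toNat + 1, by omega⟩ with ht'
    have hmem := hr' t t' rfl
    have hc0 : 0 ≤ i + (N : ℤ) ∧ i + (N : ℤ) < ((2*N+2 : ℕ) : ℤ) := ⟨h0, h0'⟩
    have hc1 : 0 ≤ (i+1) + (N : ℤ) ∧ (i+1) + (N : ℤ) < ((2*N+2 : ℕ) : ℤ) := ⟨h1, h1'⟩
    have hri : r i = r' t := by simp only [hrdef]; rw [dif_pos hc0]
    have hri1 : r (i+1) = r' t' := by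
      simp only [hrdef]; rw [dif_pos hc1]
      congr 1; apply Fin.ext; simp [ht']; omega
    have heq : (fun a b : Fin 2 =>
        (if b = 0 then r' else (fun u : Fin (2*N+2) => s ((u : ℤ) - N))) (if a = 0 then t else t'))
        = (fun a b : Fin 2 => if b = 0 then (if a = 0 then r i else r (i+1))
            else s (i + ((a : Fin 2) : ℕ))) := by
      funext a b
      fin_cases a <;> fin_cases b <;> simp [hri, hri1, ht, ht'] <;> congr 1 <;> omega
    rw [heq] at hmem
    exact hmem
  obtain ⟨r, hr⟩ := compact_path
    (fun i x y => (fun a b : Fin 2 =>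
      if b = 0 then (if a = 0 then x else y) else s (i + ((a : Fin 2) : ℕ))) ∈ B) hstep
  refine ⟨r, fun i => ?_⟩
  have heq : (fun a b : Fin 2 =>
      if b = 0 then r (i + ((a : Fin 2) : ℕ)) else s (i + ((a : Fin 2) : ℕ)))
      = (fun a b : Fin 2 =>
      if b = 0 then (if a = 0 then r i else r (i + 1)) else s (i + ((a : Fin 2) : ℕ))) := by
    funext a b
    fin_cases a <;> fin_cases b <;> simp
  rw [heq]; exact hr i

/-- If, for every `n ≥ 2`, both transition matrices `H_n(B)` and `V_n(B)` have
no zero rows and no zero columns, then `B` is rectangle-extendable. -/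
theorem rectExt_of_nonCompressible {p : ℕ} (hp : 2 ≤ p) (B : Set (Pat p))
    (hH : ∀ n : ℕ, 2 ≤ n → NonCompressible (Hmat B n))
    (hV : ∀ n : ℕ, 2 ≤ n → NonCompressible (Vmat B n)) :
    RectExt B := by
  intro m n hm hn U hU
  have hnext : ∀ c : Fin n → Fin p, ∃ d, HAdm B n c d := by
    intro c; obtain ⟨d, hd⟩ := (hH n hn).1 c
    exact ⟨d, by by_contra hc; simp [Hmat, hc] at hd⟩
  have hprev : ∀ d : Fin n → Fin p, ∃ c, HAdm B n c d := by
    intro d; obtain ⟨c, hc⟩ := (hH n hn).2 d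
    exact ⟨c, by by_contra hcc; simp [Hmat, hcc] at hc⟩
  have hVup : ∀ k, 2 ≤ k → ∀ r : Fin k → Fin p, ∃ s, VAdm B k r s := by
    intro k hk r; obtain ⟨s, hs⟩ := (hV k hk).1 r
    exact ⟨s, by by_contra hc; simp [Vmat, hc] at hs⟩
  have hVdown : ∀ k, 2 ≤ k → ∀ s : Fin k → Fin p, ∃ r, VAdm B k r s := by
    intro k hk s; obtain ⟨r, hr⟩ := (hV k hk).2 s
    exact ⟨r, by by_contra hc; simp [Vmat, hc] at hr⟩
  choose nextH hnextH using hnext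
  choose prevH hprevH using hprev
  choose nextV hnextV using fun r => exists_up B hVup r
  choose prevV hprevV using fun s => exists_down B hVdown s
  -- the columns of U
  set colU : ℕ → Fin n → Fin p := fun a k => U ((a : ℤ), ((k : ℕ) : ℤ)) with hcolU
  have hUadj : ∀ a : ℕ, a + 1 < m → HAdm B n (colU a) (colU (a+1)) := by
    intro a ha k k' hk
    have hk' := k'.isLt
    have hsq : sqr ((a : ℤ), ((k : ℕ) : ℤ)) ⊆ rect m n (0, 0) := by
      rintro x ⟨x1, x2, rfl⟩
      have h1 := x1.isLt
      have h2 := x2.isLt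
      refine ⟨a + x1, (k : ℕ) + x2, by omega, by omega, ?_⟩
      simp only [Prod.mk.injEq]
      constructor <;> push_cast <;> ring
    have hb := hU _ hsq
    have heq : (fun x y : Fin 2 =>
        (if x = 0 then colU a else colU (a+1)) (if y = 0 then k else k'))
        = blk U ((a : ℤ), ((k : ℕ) : ℤ)) := by
      funext x y
      fin_cases x <;> fin_cases y <;>
        simp [blk, hcolU] <;> congr 1 <;> simp only [Prod.mk.injEq] <;>
        constructor <;> push_cast <;> omega
    rw [heq]; exact hb
  -- the bi-infinite sequence of columns
  set F : ℕ → (Fin n → Fin p) := fun k => nextH^[k] (colU (m-1)) with hF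
  set G : ℕ → (Fin n → Fin p) := fun k => prevH^[k] (colU 0) with hG
  have hFadj : ∀ k, HAdm B n (F k) (F (k+1)) := by
    intro k; simp only [hF, Function.iterate_succ_apply']; exact hnextH _
  have hGadj : ∀ k, HAdm B n (G (k+1)) (G k) := by
    intro k; simp only [hG, Function.iterate_succ_apply']; exact hprevH _
  set col : ℤ → Fin n → Fin p := fun i =>
    if i < 0 then G (-i).toNat
    else if i < (m : ℤ) then colU i.toNat
    else F (i - ((m : ℤ) - 1)).toNat with hcol
  have hcolmid : ∀ i : ℤ, 0 ≤ i → i < (m : ℤ) → col i = colU i.toNat := by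
    intro i h0 h1
    simp only [hcol]
    rw [if_neg (by omega), if_pos h1]
  have hcolneg : ∀ i : ℤ, i ≤ 0 → col i = G (-i).toNat := by
    intro i hi
    rcases lt_or_eq_of_le hi with h | h
    · simp only [hcol]; rw [if_pos h]
    · subst h
      rw [hcolmid 0 le_rfl (by omega)]
      simp [hG]
  have hcolpos : ∀ i : ℤ, (m : ℤ) - 1 ≤ i → col i = F (i - ((m : ℤ) - 1)).toNat := by
    intro i hi
    rcases lt_or_eq_of_le hi with h | h
    · simp only [hcol]; rw [if_neg (by omega), if_neg (by omega)]
    · rw [← h, hcolmid ((m : ℤ) - 1) (by omega) (by omega),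
        show (((m:ℤ) - 1) - ((m:ℤ) - 1)) = 0 by ring]
      rw [show ((m:ℤ) - 1).toNat = m - 1 by omega]
      simp only [Int.toNat_zero, Function.iterate_zero, id_eq, hF]
  have hcoladj : ∀ i : ℤ, HAdm B n (col i) (col (i+1)) := by
    intro i
    by_cases h1 : i + 1 ≤ 0
    · rw [hcolneg i (by omega), hcolneg (i+1) h1,
        show (-i).toNat = (-(i+1)).toNat + 1 by omega]
      exact hGadj _
    · by_cases h2 : i + 1 < (m : ℤ)
      · rw [hcolmid i (by omega) (by omega), hcolmid (i+1) (by omega) h2,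
          show (i+1).toNat = i.toNat + 1 by omega]
        exact hUadj i.toNat (by omega)
      · rw [hcolpos i (by omega), hcolpos (i+1) (by omega),
          show (i + 1 - ((m:ℤ) - 1)).toNat = (i - ((m:ℤ) - 1)).toNat + 1 by omega]
        exact hFadj _
  -- rows
  have hn1 : n - 1 < n := by omega
  set top : ℤ → Fin p := fun i => col i ⟨n-1, hn1⟩ with htop
  set bot : ℤ → Fin p := fun i => col i ⟨0, by omega⟩ with hbot
  set W : ℤ × ℤ → Fin p := fun x =>
    if h1 : x.2 < 0 then prevV^[(-x.2).toNat] bot x.1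
    else if h2 : x.2 < (n : ℤ) then col x.1 ⟨x.2.toNat, by omega⟩
    else nextV^[(x.2 - ((n : ℤ) - 1)).toNat] top x.1 with hW
  have hWmid : ∀ (x jj : ℤ) (h0 : 0 ≤ jj) (h1 : jj < (n : ℤ)),
      W (x, jj) = col x ⟨jj.toNat, by omega⟩ := by
    intro x jj h0 h1
    simp only [hW]
    rw [dif_neg (by omega : ¬ ((x, jj).2 < 0)), dif_pos h1]
  have hWdown : ∀ (x jj : ℤ), jj ≤ 0 → W (x, jj) = prevV^[(-jj).toNat] bot x := by
    intro x jj h0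
    rcases lt_or_eq_of_le h0 with h | h
    · simp only [hW]; rw [dif_pos h]
    · subst h
      rw [hWmid x 0 le_rfl (by omega)]
      simp [hbot]
  have hWup : ∀ (x jj : ℤ), (n : ℤ) - 1 ≤ jj →
      W (x, jj) = nextV^[(jj - ((n : ℤ) - 1)).toNat] top x := by
    intro x jj hj
    rcases lt_or_eq_of_le hj with h | h
    · simp only [hW]; rw [dif_neg (by omega), dif_neg (by omega)]
    · rw [← h, hWmid x ((n:ℤ)-1) (by omega) (by omega),
        show (((n:ℤ) - 1) - ((n:ℤ) - 1)) = 0 by ring]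
      simp only [Int.toNat_zero, Function.iterate_zero, id_eq, htop]
      congr 1
      apply Fin.ext
      simp
      try omega
  refine ⟨W, ?_, ?_⟩
  · -- globally admissible
    rintro ⟨i, j⟩
    by_cases hj1 : j < 0
    · set k : ℕ := (-(j+1)).toNat with hk
      have hmem := hprevV (prevV^[k] bot) i
      have hA0 : ∀ x : ℤ, W (x, j) = prevV (prevV^[k] bot) x := by
        intro x
        rw [hWdown x j (by omega), show (-j).toNat = k + 1 by omega,
          Function.iterate_succ_apply']
      have hA1 : ∀ x : ℤ, W (x, j + 1) = prevV^[k] bot x := by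
        intro x
        rw [hWdown x (j+1) (by omega), show (-(j+1)).toNat = k by omega]
      have heq : blk W (i, j) = (fun a b : Fin 2 =>
          if b = 0 then prevV (prevV^[k] bot) (i + ((a : Fin 2) : ℕ))
          else (prevV^[k] bot) (i + ((a : Fin 2) : ℕ))) := by
        funext a b
        fin_cases b <;> simp [blk, hA0, hA1]
      rw [heq]; exact hmem
    · by_cases hj2 : j + 1 < (n : ℤ)
      · have h0 : 0 ≤ j := by omega
        have hkn : j.toNat < n := by omega
        have hkn' : j.toNat + 1 < n := by omega
        have hmem := hcoladj i ⟨j.toNat, hkn⟩ ⟨j.toNat + 1, hkn'⟩ rfl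
        have hB0 : ∀ x : ℤ, W (x, j) = col x ⟨j.toNat, hkn⟩ := by
          intro x; rw [hWmid x j h0 (by omega)]
        have hB1 : ∀ x : ℤ, W (x, j + 1) = col x ⟨j.toNat + 1, hkn'⟩ := by
          intro x
          rw [hWmid x (j+1) (by omega) (by omega)]
          congr 1
          apply Fin.ext
          simp
          omega
        have heq : blk W (i, j) = (fun a b : Fin 2 =>
            (if a = 0 then col i else col (i+1))
              (if b = 0 then (⟨j.toNat, hkn⟩ : Fin n) else ⟨j.toNat + 1, hkn'⟩)) := by
          funext a b
          fin_cases a <;> fin_cases b <;> simp [blk, hB0, hB1]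
        rw [heq]; exact hmem
      · set k : ℕ := (j - ((n:ℤ) - 1)).toNat with hk
        have hmem := hnextV (nextV^[k] top) i
        have hC0 : ∀ x : ℤ, W (x, j) = nextV^[k] top x := by
          intro x; rw [hWup x j (by omega)]
        have hC1 : ∀ x : ℤ, W (x, j + 1) = nextV (nextV^[k] top) x := by
          intro x
          rw [hWup x (j+1) (by omega),
            show (j + 1 - ((n:ℤ) - 1)).toNat = k + 1 by omega,
            Function.iterate_succ_apply']
        have heq : blk W (i, j) = (fun a b : Fin 2 =>
            if b = 0 then (nextV^[k] top) (i + ((a : Fin 2) : ℕ))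
            else nextV (nextV^[k] top) (i + ((a : Fin 2) : ℕ))) := by
          funext a b
          fin_cases b <;> simp [blk, hC0, hC1]
        rw [heq]; exact hmem
  · -- agreement with U on the rectangle
    rintro x ⟨a, b, ha, hb, rfl⟩
    rw [show (((0:ℤ),(0:ℤ)).1 + (a:ℕ), ((0:ℤ),(0:ℤ)).2 + (b:ℕ)) = (((a:ℕ):ℤ), ((b:ℕ):ℤ))
      from by simp]
    rw [hWmid _ (b : ℤ) (by omega) (by omega),
      hcolmid (a : ℤ) (by omega) (by exact_mod_cast ha)]
    simp [hcolU]
end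

section
/- Suppose B ⊆ S_p^{Z_{2×2}} satisfies corner-extendable conditions C(1) and C(3) (or alternatively C(2) and C(4)). Then B is rectangle-extendable if and only if B is crisscross-extendable. -/
open scoped Classical

/-- The four L-shaped lattices obtained from `Z_{3×3}` by removing one corner. -/
def Lshape : Fin 4 → Set (ℤ × ℤ)
  | 0 => rect 3 3 (0, 0) \ {((2 : ℤ), (2 : ℤ))}
  | 1 => rect 3 3 (0, 0) \ {((0 : ℤ), (2 : ℤ))}
  | 2 => rect 3 3 (0, 0) \ {((0 : ℤ), (0 : ℤ))}
  | 3 => rect 3 3 (0, 0) \ {((2 : ℤ), (0 : ℤ))}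

/-- The corner-extendable condition `C(i)` (here `i : Fin 4` stands for
`C(i+1)` of the paper): every `B`-admissible pattern on the L-shaped lattice
`L_{i+1}` extends to a `B`-admissible pattern on `Z_{3×3}`. -/
def CornerExt {p : ℕ} (B : Set (Pat p)) (i : Fin 4) : Prop :=
  ∀ U : ℤ × ℤ → Fin p, AdmOn B (Lshape i) U →
    ∃ U', AdmOn B (rect 3 3 (0, 0)) U' ∧ ∀ x ∈ Lshape i, U' x = U x

/-- `B` is crisscross-extendable: every `b ∈ B` extends to a `B`-admissible
pattern on the crisscross lattice `Z₊`. -/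
def CrissExt {p : ℕ} (B : Set (Pat p)) : Prop :=
  ∀ b ∈ B, ∃ U : ℤ × ℤ → Fin p, AdmOn B Zplus U ∧ blk U (0, 0) = b


/-!
A crisscross extension of the bottom-right block of an admissible `m × n` rectangle supplies two
cells of a new column on its right, and `C(1)` fills the rest of that column upwards one cell at a
time, each new cell being the missing corner of a translate of `L₁`. Transposing gives a new row
on top, and the point reflection, which exchanges `C(1)` and `C(3)`, gives a new column on the left
and a new row below. Growing the rectangle on all four sides in turn yields a chain of nested
admissible rectangles exhausting `ℤ²`, whose union is a global configuration. A reflection in a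
horizontal line exchanges `C(1), C(3)` with `C(4), C(2)`. Conversely, a global extension of a
single block restricts to the crisscross lattice.
-/

section Lattice

lemma mem_rect {m n : ℕ} {v x : ℤ × ℤ} :
    x ∈ rect m n v ↔ v.1 ≤ x.1 ∧ x.1 < v.1 + m ∧ v.2 ≤ x.2 ∧ x.2 < v.2 + n := by
  constructor
  · rintro ⟨a, b, ha, hb, rfl⟩
    omega
  · rintro ⟨h1, h2, h3, h4⟩
    exact ⟨(x.1 - v.1).toNat, (x.2 - v.2).toNat, by omega, by omega,
      Prod.ext (by omega) (by omega)⟩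

lemma sqr_eq_rect (v : ℤ × ℤ) : sqr v = rect 2 2 v := by
  ext x
  constructor
  · rintro ⟨a, b, rfl⟩
    exact ⟨a, b, a.isLt, b.isLt, rfl⟩
  · rintro ⟨a, b, ha, hb, rfl⟩
    exact ⟨⟨a, ha⟩, ⟨b, hb⟩, rfl⟩

lemma mem_sqr {v x : ℤ × ℤ} :
    x ∈ sqr v ↔ v.1 ≤ x.1 ∧ x.1 ≤ v.1 + 1 ∧ v.2 ≤ x.2 ∧ x.2 ≤ v.2 + 1 := by
  rw [sqr_eq_rect, mem_rect]
  omega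

lemma sqr_subset_iff {v : ℤ × ℤ} {R : Set (ℤ × ℤ)} :
    sqr v ⊆ R ↔
      v ∈ R ∧ (v.1 + 1, v.2) ∈ R ∧ (v.1, v.2 + 1) ∈ R ∧ (v.1 + 1, v.2 + 1) ∈ R := by
  constructor
  · intro h
    exact ⟨h ⟨0, 0, by simp⟩, h ⟨1, 0, by simp⟩, h ⟨0, 1, by simp⟩, h ⟨1, 1, by simp⟩⟩
  · rintro ⟨h00, h10, h01, h11⟩ x ⟨a, b, rfl⟩
    fin_cases a <;> fin_cases b <;> simpa

lemma mem_Zplus {x : ℤ × ℤ} :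
    x ∈ Zplus ↔ (-1 ≤ x.1 ∧ x.1 ≤ 2 ∧ 0 ≤ x.2 ∧ x.2 ≤ 1) ∨
      (0 ≤ x.1 ∧ x.1 ≤ 1 ∧ -1 ≤ x.2 ∧ x.2 ≤ 2) := by
  simp only [Zplus, Set.mem_union, mem_sqr]
  omega

lemma mem_rect33_sdiff_singleton {x c : ℤ × ℤ} :
    x ∈ rect 3 3 (0, 0) \ {c} ↔
      (0 ≤ x.1 ∧ x.1 < 3 ∧ 0 ≤ x.2 ∧ x.2 < 3) ∧ ¬(x.1 = c.1 ∧ x.2 = c.2) := by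
  simp only [Set.mem_sdiff, mem_rect, Set.mem_singleton_iff, Prod.ext_iff]
  omega

end Lattice

section Extension

variable {p : ℕ} {B : Set (Pat p)}

lemma blk_congr {U U' : ℤ × ℤ → Fin p} {v : ℤ × ℤ} (h : ∀ x ∈ sqr v, U x = U' x) :
    blk U v = blk U' v := by
  funext a b
  exact h _ ⟨a, b, rfl⟩

lemma AdmOn.mono {R R' : Set (ℤ × ℤ)} {U : ℤ × ℤ → Fin p} (h : AdmOn B R U)
    (hR : R' ⊆ R) : AdmOn B R' U :=
  fun v hv => h v (hv.trans hR)

lemma admOn_univ_iff {U : ℤ × ℤ → Fin p} : AdmOn B Set.univ U ↔ Glob B U :=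
  ⟨fun h v => h v (Set.subset_univ _), fun h v _ => h v⟩

def ExtendsTo (B : Set (Pat p)) (R R' : Set (ℤ × ℤ)) : Prop :=
  ∀ U : ℤ × ℤ → Fin p, AdmOn B R U → ∃ U', AdmOn B R' U' ∧ ∀ x ∈ R, U' x = U x

lemma ExtendsTo.trans {R R' R'' : Set (ℤ × ℤ)} (h : ExtendsTo B R R') (h' : ExtendsTo B R' R'')
    (hR : R ⊆ R') : ExtendsTo B R R'' := by
  intro U hU
  obtain ⟨U', hU', hU'U⟩ := h U hU
  obtain ⟨U'', hU'', hU''U'⟩ := h' U' hU'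
  exact ⟨U'', hU'', fun x hx => (hU''U' x (hR hx)).trans (hU'U x hx)⟩

lemma ExtendsTo.mono {R R' R'' : Set (ℤ × ℤ)} (h : ExtendsTo B R R') (hR' : R'' ⊆ R') :
    ExtendsTo B R R'' := by
  intro U hU
  obtain ⟨U', hU', hU'U⟩ := h U hU
  exact ⟨U', hU'.mono hR', hU'U⟩

lemma ExtendsTo.glue {R S T R' : Set (ℤ × ℤ)} (h : ExtendsTo B T S) (hT : R ∩ S = T)
    (hsqr : ∀ w, sqr w ⊆ R' → sqr w ⊆ R ∨ sqr w ⊆ S) :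
    ExtendsTo B R R' := by
  classical
  intro U hU
  obtain ⟨V, hV, hVU⟩ := h U (hU.mono (hT.ge.trans Set.inter_subset_left))
  have hR : ∀ x ∈ R, S.piecewise V U x = U x := by
    intro x hx
    by_cases hxS : x ∈ S
    · rw [Set.piecewise_eq_of_mem _ _ _ hxS, hVU x (hT ▸ ⟨hx, hxS⟩)]
    · exact Set.piecewise_eq_of_notMem _ _ _ hxS
  refine ⟨S.piecewise V U, fun w hw => ?_, hR⟩
  rcases hsqr w hw with hwR | hwS
  · rw [blk_congr fun x hx => hR x (hwR hx)]
    exact hU w hwR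
  · rw [blk_congr fun x hx => Set.piecewise_eq_of_mem S V U (hwS hx)]
    exact hV w hwS

lemma crissExt_iff : CrissExt B ↔ ExtendsTo B (sqr (0, 0)) Zplus := by
  have hsqr : ∀ U : ℤ × ℤ → Fin p, AdmOn B (sqr (0, 0)) U ↔ blk U (0, 0) ∈ B := by
    refine fun U => ⟨fun h => h _ le_rfl, fun h w hw => ?_⟩
    obtain rfl : w = (0, 0) := by
      simp only [sqr_subset_iff, mem_sqr] at hw
      exact Prod.ext (by omega) (by omega)
    exact h
  constructor
  · intro h U hU
    obtain ⟨U', hU', hblk⟩ := h _ ((hsqr U).1 hU)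
    exact ⟨U', hU', fun x ⟨a, b, hx⟩ => hx ▸ congrFun (congrFun hblk a) b⟩
  · intro h b hb
    let U : ℤ × ℤ → Fin p := fun x => b (if x.1 = 0 then 0 else 1) (if x.2 = 0 then 0 else 1)
    have hUb : blk U (0, 0) = b := by
      funext a c
      fin_cases a <;> fin_cases c <;> rfl
    obtain ⟨U', hU', hU'U⟩ := h U ((hsqr U).2 (hUb ▸ hb))
    exact ⟨U', hU', hUb ▸ blk_congr hU'U⟩

lemma rectExt_iff : RectExt B ↔
    ∀ m n : ℕ, 2 ≤ m → 2 ≤ n → ExtendsTo B (rect m n (0, 0)) Set.univ := by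
  simp only [RectExt, ExtendsTo, admOn_univ_iff]

end Extension

section Symmetry

/-- A bijection of `ℤ²` mapping `2×2` squares onto `2×2` squares; `corner` follows the lower-left
corners and `pat` records how the entries of a block are permuted. -/
structure SquareSymmetry (p : ℕ) where
  toEquiv : ℤ × ℤ ≃ ℤ × ℤ
  corner : ℤ × ℤ ≃ ℤ × ℤ
  pat : Pat p → Pat p
  involutive_pat : Function.Involutive pat
  preimage_sqr : ∀ w, toEquiv ⁻¹' sqr (corner w) = sqr w
  blk_comp : ∀ (U : ℤ × ℤ → Fin p) w, blk (U ∘ toEquiv) w = pat (blk U (corner w))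

variable {p : ℕ} {B : Set (Pat p)} (σ : SquareSymmetry p)

lemma SquareSymmetry.preimage_pat_preimage_pat : σ.pat ⁻¹' (σ.pat ⁻¹' B) = B := by
  ext b
  simp only [Set.mem_preimage, σ.involutive_pat b]

lemma admOn_comp_iff {R : Set (ℤ × ℤ)} {U : ℤ × ℤ → Fin p} :
    AdmOn (σ.pat ⁻¹' B) (σ.toEquiv ⁻¹' R) (U ∘ σ.toEquiv) ↔ AdmOn B R U := by
  have key : ∀ w, blk (U ∘ σ.toEquiv) w ∈ σ.pat ⁻¹' B ↔ blk U (σ.corner w) ∈ B := by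
    intro w
    rw [Set.mem_preimage, σ.blk_comp, σ.involutive_pat]
  have hsqr : ∀ w, sqr w ⊆ σ.toEquiv ⁻¹' R ↔ sqr (σ.corner w) ⊆ R := by
    intro w
    rw [← σ.preimage_sqr, Equiv.preimage_subset]
  constructor
  · intro h w hw
    obtain ⟨w, rfl⟩ := σ.corner.surjective w
    exact (key w).1 (h w ((hsqr w).2 hw))
  · exact fun h w hw => (key w).2 (h _ ((hsqr w).1 hw))

lemma ExtendsTo.comp {R R' : Set (ℤ × ℤ)} (h : ExtendsTo B R R') :
    ExtendsTo (σ.pat ⁻¹' B) (σ.toEquiv ⁻¹' R) (σ.toEquiv ⁻¹' R') := by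
  intro U hU
  have hU' : AdmOn B R (U ∘ σ.toEquiv.symm) := by
    rwa [← admOn_comp_iff σ, Function.comp_assoc, Equiv.symm_comp_self, Function.comp_id]
  obtain ⟨V, hV, hVU⟩ := h _ hU'
  exact ⟨V ∘ σ.toEquiv, (admOn_comp_iff σ).2 hV, fun x hx => by simpa using hVU _ hx⟩

end Symmetry

namespace SquareSymmetry

variable {p : ℕ}

def translation (t : ℤ × ℤ) : SquareSymmetry p where
  toEquiv := Equiv.addRight t
  corner := Equiv.addRight t
  pat := id
  involutive_pat := fun _ => rfl
  preimage_sqr w := by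
    ext x
    simp only [Set.mem_preimage, Equiv.coe_addRight, mem_sqr, Prod.fst_add, Prod.snd_add]
    omega
  blk_comp U w := by
    funext a b
    simp only [blk, Function.comp_apply, Equiv.coe_addRight, id, Prod.fst_add, Prod.snd_add]
    congr 1
    ext <;> simp only [Prod.fst_add, Prod.snd_add] <;> ring

def transpose : SquareSymmetry p where
  toEquiv := Equiv.prodComm ℤ ℤ
  corner := Equiv.prodComm ℤ ℤ
  pat b a c := b c a
  involutive_pat := fun _ => rfl
  preimage_sqr w := by
    ext x
    simp only [Set.mem_preimage, Equiv.prodComm_apply, Prod.fst_swap, Prod.snd_swap, mem_sqr]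
    omega
  blk_comp _ _ := rfl

def subLeft (v : ℤ × ℤ) : SquareSymmetry p where
  toEquiv := Equiv.subLeft v
  corner := Equiv.subLeft (v - (1, 1))
  pat b a c := b a.rev c.rev
  involutive_pat := fun _ => by simp
  preimage_sqr w := by
    ext x
    simp only [Set.mem_preimage, Equiv.subLeft_apply, mem_sqr, Prod.fst_sub, Prod.snd_sub]
    omega
  blk_comp U w := by
    funext a b
    simp only [blk, Function.comp_apply, Equiv.subLeft_apply, Fin.val_rev]
    congr 1
    ext <;> simp only [Prod.fst_sub, Prod.snd_sub] <;> omega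

def subLeftSnd (c : ℤ) : SquareSymmetry p where
  toEquiv := (Equiv.refl ℤ).prodCongr (Equiv.subLeft c)
  corner := (Equiv.refl ℤ).prodCongr (Equiv.subLeft (c - 1))
  pat b a d := b a d.rev
  involutive_pat := fun _ => by simp
  preimage_sqr w := by
    ext x
    simp only [Set.mem_preimage, Equiv.prodCongr_apply, Prod.map, Equiv.refl_apply,
      Equiv.subLeft_apply, mem_sqr]
    omega
  blk_comp U w := by
    funext a b
    simp only [blk, Function.comp_apply, Equiv.prodCongr_apply, Prod.map, Equiv.refl_apply,
      Equiv.subLeft_apply, Fin.val_rev]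
    congr 1
    exact Prod.ext rfl (by omega)

lemma transpose_apply (x : ℤ × ℤ) : (transpose : SquareSymmetry p).toEquiv x = (x.2, x.1) :=
  rfl

lemma subLeft_apply (v x : ℤ × ℤ) :
    (subLeft v : SquareSymmetry p).toEquiv x = (v.1 - x.1, v.2 - x.2) :=
  rfl

lemma subLeftSnd_apply (c : ℤ) (x : ℤ × ℤ) :
    (subLeftSnd c : SquareSymmetry p).toEquiv x = (x.1, c - x.2) :=
  rfl

end SquareSymmetry

open SquareSymmetry

section Growth

variable {p : ℕ} {B : Set (Pat p)}

lemma ExtendsTo.translate {R R' : Set (ℤ × ℤ)} (h : ExtendsTo B R R') (t : ℤ × ℤ) :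
    ExtendsTo B ((· + t) ⁻¹' R) ((· + t) ⁻¹' R') :=
  h.comp (translation t)

lemma preimage_add_rect (m n : ℕ) (v t : ℤ × ℤ) :
    (· + t) ⁻¹' rect m n v = rect m n (v - t) := by
  ext x
  simp only [Set.mem_preimage, mem_rect, Prod.fst_add, Prod.snd_add, Prod.fst_sub, Prod.snd_sub]
  omega

lemma CrissExt.extendsTo_rect (h : CrissExt B) (w : ℤ × ℤ) :
    ExtendsTo B (rect 2 2 w) (rect 3 2 w) := by
  have h0 : ExtendsTo B (rect 2 2 0) (rect 3 2 0) := by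
    refine (sqr_eq_rect (0, 0) ▸ crissExt_iff.1 h).mono fun x hx => ?_
    simp only [mem_rect, mem_Zplus, Prod.fst_zero, Prod.snd_zero] at hx ⊢
    omega
  have := h0.translate (-w)
  rwa [preimage_add_rect, preimage_add_rect, zero_sub, neg_neg] at this

lemma CornerExt.extendsTo_rect (h : CornerExt B 0) (w : ℤ × ℤ) :
    ExtendsTo B (rect 3 3 w \ {(w.1 + 2, w.2 + 2)}) (rect 3 3 w) := by
  convert ExtendsTo.translate h (-w) using 1 <;> ext x <;>
    simp only [Lshape, Set.mem_preimage, Set.mem_sdiff, mem_rect, Set.mem_singleton_iff,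
      Prod.ext_iff, Prod.fst_add, Prod.snd_add, Prod.fst_neg, Prod.snd_neg] <;> omega

lemma extendsTo_addCol (hcriss : CrissExt B) (hC1 : CornerExt B 0) {m n : ℕ} (hm : 2 ≤ m)
    (hn : 2 ≤ n) (v : ℤ × ℤ) : ExtendsTo B (rect m n v) (rect (m + 1) n v) := by
  induction n, hn using Nat.le_induction with
  | base =>
    refine (hcriss.extendsTo_rect (v.1 + m - 2, v.2)).glue ?_ fun w => ?_
    · ext x
      simp only [Set.mem_inter_iff, mem_rect]
      omega
    · simp only [sqr_subset_iff, mem_rect]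
      omega
  | succ n hn ih =>
    have hcol : ExtendsTo B (rect m (n + 1) v)
        (rect (m + 1) (n + 1) v \ {(v.1 + m, v.2 + n)}) := by
      refine ih.glue (S := rect (m + 1) n v) ?_ fun w => ?_
      · ext x
        simp only [Set.mem_inter_iff, mem_rect]
        omega
      · simp only [sqr_subset_iff, mem_rect, Set.mem_sdiff, Set.mem_singleton_iff, Prod.ext_iff]
        omega
    have hcorner : ExtendsTo B (rect (m + 1) (n + 1) v \ {(v.1 + m, v.2 + n)})
        (rect (m + 1) (n + 1) v) := by
      refine (hC1.extendsTo_rect (v.1 + m - 2, v.2 + n - 2)).glue ?_ fun w => ?_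
      · ext x
        simp only [Set.mem_inter_iff, mem_rect, Set.mem_sdiff, Set.mem_singleton_iff, Prod.ext_iff]
        omega
      · simp only [sqr_subset_iff, mem_rect, Set.mem_sdiff, Set.mem_singleton_iff, Prod.ext_iff]
        omega
    refine hcol.trans hcorner fun x hx => ?_
    simp only [mem_rect, Set.mem_sdiff, Set.mem_singleton_iff, Prod.ext_iff] at hx ⊢
    omega

end Growth

section Directions

variable {p : ℕ} {B : Set (Pat p)}

lemma CrissExt.comp (h : CrissExt B) (σ : SquareSymmetry p)
    (hsqr : ∀ x, σ.toEquiv x ∈ sqr (0, 0) ↔ x ∈ sqr (0, 0))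
    (hZ : ∀ x, σ.toEquiv x ∈ Zplus ↔ x ∈ Zplus) : CrissExt (σ.pat ⁻¹' B) := by
  rw [crissExt_iff] at h ⊢
  have := h.comp σ
  rwa [show σ.toEquiv ⁻¹' sqr (0, 0) = sqr (0, 0) from Set.ext hsqr,
    show σ.toEquiv ⁻¹' Zplus = Zplus from Set.ext hZ] at this

lemma CornerExt.comp {i j : Fin 4} (h : CornerExt B i) (σ : SquareSymmetry p)
    (hL : ∀ x, σ.toEquiv x ∈ Lshape i ↔ x ∈ Lshape j)
    (hR : ∀ x, σ.toEquiv x ∈ rect 3 3 (0, 0) ↔ x ∈ rect 3 3 (0, 0)) :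
    CornerExt (σ.pat ⁻¹' B) j := by
  have := ExtendsTo.comp σ h
  rwa [show σ.toEquiv ⁻¹' Lshape i = Lshape j from Set.ext hL,
    show σ.toEquiv ⁻¹' rect 3 3 (0, 0) = rect 3 3 (0, 0) from Set.ext hR] at this

lemma extendsTo_addRow (hcriss : CrissExt B) (hC1 : CornerExt B 0) {m n : ℕ} (hm : 2 ≤ m)
    (hn : 2 ≤ n) (v : ℤ × ℤ) : ExtendsTo B (rect m n v) (rect m (n + 1) v) := by
  have hcriss' := hcriss.comp transpose
    (fun x => by simp only [transpose_apply, mem_sqr]; omega)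
    (fun x => by simp only [transpose_apply, mem_Zplus]; omega)
  have hC1' := hC1.comp (j := 0) transpose
    (fun x => by simp only [transpose_apply, Lshape, mem_rect33_sdiff_singleton]; omega)
    (fun x => by simp only [transpose_apply, mem_rect]; omega)
  have := (extendsTo_addCol hcriss' hC1' hn hm v.swap).comp transpose
  rw [preimage_pat_preimage_pat] at this
  convert this using 1 <;> ext x <;>
    simp only [Set.mem_preimage, transpose_apply, mem_rect, Prod.fst_swap, Prod.snd_swap] <;> omega

lemma CrissExt.comp_subLeft (h : CrissExt B) : CrissExt ((subLeft 0).pat ⁻¹' B) :=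
  h.comp (subLeft (1, 1)) (fun x => by simp only [subLeft_apply, mem_sqr]; omega)
    (fun x => by simp only [subLeft_apply, mem_Zplus]; omega)

lemma CornerExt.comp_subLeft (h : CornerExt B 2) : CornerExt ((subLeft 0).pat ⁻¹' B) 0 :=
  h.comp (subLeft (2, 2))
    (fun x => by simp only [subLeft_apply, Lshape, mem_rect33_sdiff_singleton]; omega)
    (fun x => by simp only [subLeft_apply, mem_rect]; omega)

lemma extendsTo_addColLeft (hcriss : CrissExt B) (hC3 : CornerExt B 2) {m n : ℕ} (hm : 2 ≤ m)
    (hn : 2 ≤ n) (v : ℤ × ℤ) : ExtendsTo B (rect m n v) (rect (m + 1) n (v.1 - 1, v.2)) := by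
  have := (extendsTo_addCol hcriss.comp_subLeft hC3.comp_subLeft hm hn
    (-v.1 - m + 1, -v.2 - n + 1)).comp (subLeft 0)
  rw [preimage_pat_preimage_pat] at this
  convert this using 1 <;> ext x <;>
    simp only [Set.mem_preimage, subLeft_apply, mem_rect, Prod.fst_zero, Prod.snd_zero] <;> omega

lemma extendsTo_addRowBelow (hcriss : CrissExt B) (hC3 : CornerExt B 2) {m n : ℕ} (hm : 2 ≤ m)
    (hn : 2 ≤ n) (v : ℤ × ℤ) : ExtendsTo B (rect m n v) (rect m (n + 1) (v.1, v.2 - 1)) := by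
  have := (extendsTo_addRow hcriss.comp_subLeft hC3.comp_subLeft hm hn
    (-v.1 - m + 1, -v.2 - n + 1)).comp (subLeft 0)
  rw [preimage_pat_preimage_pat] at this
  convert this using 1 <;> ext x <;>
    simp only [Set.mem_preimage, subLeft_apply, mem_rect, Prod.fst_zero, Prod.snd_zero] <;> omega

end Directions

section Global

variable {p : ℕ} {B : Set (Pat p)}

lemma extendsTo_expand (hcriss : CrissExt B) (hC1 : CornerExt B 0) (hC3 : CornerExt B 2)
    {m n : ℕ} (hm : 2 ≤ m) (hn : 2 ≤ n) (v : ℤ × ℤ) :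
    ExtendsTo B (rect m n v) (rect (m + 2) (n + 2) (v.1 - 1, v.2 - 1)) := by
  have hR := extendsTo_addCol hcriss hC1 hm hn v
  have hT := extendsTo_addRow hcriss hC1 (m := m + 1) (by omega) hn v
  have hL := extendsTo_addColLeft hcriss hC3 (m := m + 1) (n := n + 1) (by omega) (by omega) v
  have hB := extendsTo_addRowBelow hcriss hC3 (m := m + 2) (n := n + 1) (by omega) (by omega)
    (v.1 - 1, v.2)
  refine hR.trans (hT.trans (hL.trans hB ?_) ?_) ?_ <;> intro x <;> simp only [mem_rect] <;> omega

lemma extendsTo_univ_of_chain {R : ℕ → Set (ℤ × ℤ)} (hR : Monotone R)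
    (hcover : ∀ w, ∃ k, sqr w ⊆ R k) (hstep : ∀ k, ExtendsTo B (R k) (R (k + 1))) :
    ExtendsTo B (R 0) Set.univ := by
  intro U hU
  choose! F hF hFeq using hstep
  let T : ℕ → ℤ × ℤ → Fin p := fun k => Nat.rec U (fun k V => F k V) k
  have hT : ∀ k, AdmOn B (R k) (T k) := by
    intro k
    induction k with
    | zero => exact hU
    | succ k ih => exact hF k _ ih
  have hT_le : ∀ j k, j ≤ k → ∀ x ∈ R j, T k x = T j x := by
    intro j k hjk
    induction k, hjk using Nat.le_induction with
    | base => exact fun _ _ => rfl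
    | succ k hjk ih => exact fun x hx => (hFeq k _ (hT k) x (hR hjk hx)).trans (ih x hx)
  have hT_eq : ∀ j k x, x ∈ R j → x ∈ R k → T j x = T k x := by
    intro j k x hj hk
    rcases le_total j k with h | h
    · exact (hT_le j k h x hj).symm
    · exact hT_le k j h x hk
  choose K hK using hcover
  have hmem : ∀ x, x ∈ R (K x) := fun x => hK x (mem_sqr.2 (by omega))
  refine ⟨fun x => T (K x) x, fun w _ => ?_, fun x hx => hT_le 0 (K x) (Nat.zero_le _) x hx⟩
  rw [blk_congr fun x hx => hT_eq _ (K w) x (hmem x) (hK w hx)]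
  exact hT (K w) w (hK w)

lemma extendsTo_univ_of_cornerExt_zero_two (hcriss : CrissExt B) (hC1 : CornerExt B 0)
    (hC3 : CornerExt B 2) {m n : ℕ} (hm : 2 ≤ m) (hn : 2 ≤ n) (v : ℤ × ℤ) :
    ExtendsTo B (rect m n v) Set.univ := by
  let R : ℕ → Set (ℤ × ℤ) := fun k => rect (m + 2 * k) (n + 2 * k) (v.1 - k, v.2 - k)
  have hR : Monotone R := monotone_nat_of_le_succ fun k x hx => by
    simp only [R, mem_rect] at hx ⊢
    push_cast at hx ⊢
    omega
  have hcover : ∀ w, ∃ k, sqr w ⊆ R k := fun w =>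
    ⟨(w.1 - v.1).natAbs + (w.2 - v.2).natAbs + 2, by simp only [R, sqr_subset_iff, mem_rect]; omega⟩
  have hstep : ∀ k, ExtendsTo B (R k) (R (k + 1)) := fun k => by
    convert extendsTo_expand hcriss hC1 hC3 (m := m + 2 * k) (n := n + 2 * k) (by omega)
      (by omega) (v.1 - k, v.2 - k) using 1
    ext x
    simp only [R, mem_rect]
    push_cast
    omega
  simpa [R] using extendsTo_univ_of_chain hR hcover hstep

end Global

section Flip

variable {p : ℕ} {B : Set (Pat p)}

lemma extendsTo_univ_of_cornerExt_one_three (hcriss : CrissExt B) (hC2 : CornerExt B 1)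
    (hC4 : CornerExt B 3) {m n : ℕ} (hm : 2 ≤ m) (hn : 2 ≤ n) :
    ExtendsTo B (rect m n (0, 0)) Set.univ := by
  have hcriss' : CrissExt ((subLeftSnd 0).pat ⁻¹' B) :=
    hcriss.comp (subLeftSnd 1) (fun x => by simp only [subLeftSnd_apply, mem_sqr]; omega)
      (fun x => by simp only [subLeftSnd_apply, mem_Zplus]; omega)
  have hC1' : CornerExt ((subLeftSnd 0).pat ⁻¹' B) 0 :=
    hC4.comp (subLeftSnd 2)
      (fun x => by simp only [subLeftSnd_apply, Lshape, mem_rect33_sdiff_singleton]; omega)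
      (fun x => by simp only [subLeftSnd_apply, mem_rect]; omega)
  have hC3' : CornerExt ((subLeftSnd 0).pat ⁻¹' B) 2 :=
    hC2.comp (subLeftSnd 2)
      (fun x => by simp only [subLeftSnd_apply, Lshape, mem_rect33_sdiff_singleton]; omega)
      (fun x => by simp only [subLeftSnd_apply, mem_rect]; omega)
  have := (extendsTo_univ_of_cornerExt_zero_two hcriss' hC1' hC3' hm hn (0, 1 - n)).comp
    (subLeftSnd 0)
  rw [preimage_pat_preimage_pat, Set.preimage_univ] at this
  convert this using 1
  ext x
  simp only [Set.mem_preimage, subLeftSnd_apply, mem_rect]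
  omega

end Flip

theorem rectExt_iff_crissExt_general {p : ℕ} (B : Set (Pat p))
    (hC : (CornerExt B 0 ∧ CornerExt B 2) ∨ (CornerExt B 1 ∧ CornerExt B 3)) :
    RectExt B ↔ CrissExt B := by
  rw [rectExt_iff]
  constructor
  · intro h
    exact crissExt_iff.2 (sqr_eq_rect (0, 0) ▸ (h 2 2 le_rfl le_rfl).mono (Set.subset_univ _))
  · intro hcriss m n hm hn
    rcases hC with ⟨hC1, hC3⟩ | ⟨hC2, hC4⟩
    · exact extendsTo_univ_of_cornerExt_zero_two hcriss hC1 hC3 hm hn _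
    · exact extendsTo_univ_of_cornerExt_one_three hcriss hC2 hC4 hm hn

/-- If `B` satisfies `C(1)` and `C(3)`, or `C(2)` and `C(4)`, then `B` is
rectangle-extendable if and only if `B` is crisscross-extendable. -/
theorem rectExt_iff_crissExt {p : ℕ} (hp : 2 ≤ p) (B : Set (Pat p))
    (hC : (CornerExt B 0 ∧ CornerExt B 2) ∨ (CornerExt B 1 ∧ CornerExt B 3)) :
    RectExt B ↔ CrissExt B :=
  rectExt_iff_crissExt_general B hC
end

section
/- The Simplified Golden-Mean basic set B_s (2×2 blocks over {0,1} with at most one 1) does not satisfy the hole-filling condition for any size (M,N): there is a B_s-admissible pattern on the annulus A_{M×N} (the (M+4)×(N+4) rectangle minus the central M×N hole) that does not extend to a B_s-admissible pattern on the full (M+4)×(N+4) rectangle. -/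
open scoped Classical

/-- The Simplified Golden-Mean basic set: `2×2` patterns over `{0,1}` with at
most one entry equal to `1`. -/
def Bsgm : Set (Pat 2) :=
  {U | (∑ a : Fin 2, ∑ b : Fin 2, (U a b : ℕ)) ≤ 1}

/-- The annular lattice `A_{M×N}`: the `(M+4)×(N+4)` rectangle with lower-left
corner `(-2,-2)` minus the central `M×N` hole. -/
def annulus (M N : ℕ) : Set (ℤ × ℤ) :=
  rect (M + 4) (N + 4) (-2, -2) \ rect M N (0, 0)

set_option maxHeartbeats 1600000 in
/-- The Simplified Golden-Mean basic set fails the hole-filling condition for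
every size `(M,N)`: there is an admissible pattern on the annulus `A_{M×N}`
which does not extend to an admissible pattern on the full rectangle. -/
theorem sgm_not_holeFilling (M N : ℕ) (hM : 1 ≤ M) (hN : 1 ≤ N) :
    ∃ U : ℤ × ℤ → Fin 2, AdmOn Bsgm (annulus M N) U ∧
      ¬ ∃ U' : ℤ × ℤ → Fin 2, AdmOn Bsgm (rect (M + 4) (N + 4) (-2, -2)) U' ∧
        ∀ x ∈ annulus M N, U' x = U x := by
  classical
  refine ⟨fun x => if x = ((-1 : ℤ), (0 : ℤ)) ∨ x = ((0 : ℤ), (-1 : ℤ)) then 1 else 0, ?_, ?_⟩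
  · -- Admissible on the annulus
    intro v hv
    have hv' : ¬ (v.1 = -1 ∧ v.2 = -1) := by
      rintro ⟨h1, h2⟩
      have h00 : ((0 : ℤ), (0 : ℤ)) ∈ sqr v := by
        exact ⟨1, 1, by simp [Prod.ext_iff, h1, h2]⟩
      have := hv h00
      exact this.2 ⟨0, 0, hM, hN, by simp⟩
    show (∑ a : Fin 2, ∑ b : Fin 2, _) ≤ 1
    simp only [blk, Fin.sum_univ_two, Fin.val_zero, Fin.val_one]
    push_cast
    split_ifs with h1 h2 h3 h4 h5 h6 h7 h8 h9 h10 h11 h12 h13 h14 <;>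
      simp_all [Prod.ext_iff] <;> omega
  · -- No extension
    rintro ⟨U', hAdm, hEq⟩
    have hsq : sqr ((-1 : ℤ), (-1 : ℤ)) ⊆ rect (M + 4) (N + 4) (-2, -2) := by
      rintro x ⟨a, b, rfl⟩
      have ha := a.isLt
      have hb := b.isLt
      refine ⟨1 + a.val, 1 + b.val, by omega, by omega, ?_⟩
      simp only [Prod.mk.injEq]
      push_cast
      constructor <;> ring
    have hmem := hAdm _ hsq
    have hA : ((-1 : ℤ), (0 : ℤ)) ∈ annulus M N := by
      constructor
      · exact ⟨1, 2, by omega, by omega, by norm_num⟩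
      · rintro ⟨a, b, _, _, h⟩
        simp [Prod.ext_iff] at h
    have hB : ((0 : ℤ), (-1 : ℤ)) ∈ annulus M N := by
      constructor
      · exact ⟨2, 1, by omega, by omega, by norm_num⟩
      · rintro ⟨a, b, _, _, h⟩
        simp [Prod.ext_iff] at h
    have e1 : U' ((-1 : ℤ), (0 : ℤ)) = 1 := by rw [hEq _ hA]; simp
    have e2 : U' ((0 : ℤ), (-1 : ℤ)) = 1 := by rw [hEq _ hB]; simp
    have : (∑ a : Fin 2, ∑ b : Fin 2, ((blk U' ((-1 : ℤ), (-1 : ℤ))) a b : ℕ)) ≤ 1 := hmem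
    simp only [blk, Fin.sum_univ_two, Fin.val_zero, Fin.val_one] at this
    norm_num at this
    rw [e1, e2] at this
    simp at this
    omega
end

section
/- Consider the edge-coloring shift Σ(B_{e;8}) of the eight-vertex model: colorings of the edges of Z² by {0,1} such that at every vertex the sum of the four incident edge colors is even. Then Σ(B_{e;8}) has strong specification with constant M = 2. -/
/-- An edge of the lattice `ℤ²`: `(v, true)` is the horizontal edge from `v`
to `v + (1,0)`, and `(v, false)` is the vertical edge from `v` to `v + (0,1)`. -/
abbrev Edge := (ℤ × ℤ) × Bool

/-- The two endpoints of an edge. -/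
def edgeEnds (e : Edge) : Set (ℤ × ℤ) :=
  {e.1, if e.2 then (e.1.1 + 1, e.1.2) else (e.1.1, e.1.2 + 1)}

/-- Eight-vertex admissibility: at every vertex the sum of the colors of the
four incident edges is even. -/
def Adm8 (W : Edge → ZMod 2) : Prop :=
  ∀ v : ℤ × ℤ,
    W ((v.1 - 1, v.2), true) + W ((v.1, v.2 - 1), false) + W (v, true) + W (v, false) = 0


/-!
Read on the dual lattice, an admissible configuration is a closed `ZMod 2`-valued 1-form on the
faces of `ℤ²`, so by the discrete Poincaré lemma it is the coboundary of a face potential `F`: the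
color of an edge is the difference of `F` on the two faces it separates. Given potentials `F₁, F₂`
of `W₁, W₂`, take `F₂` on the faces adjacent to an edge of `E₂` and `F₁` elsewhere; its coboundary
is admissible, agrees with `W₂` on `E₂`, and agrees with `W₁` on `E₁` because an edge of `E₁` and
an edge of `E₂` adjacent to a common face have base points at distance `< 2`.
-/

open Finset

section DiscretePoincare

variable {G : Type*} [AddCommGroup G]

noncomputable def discreteAntideriv (g : ℤ → G) (n : ℤ) : G :=
  ∑ k ∈ Ioc 0 n, g k - ∑ k ∈ Ioc n 0, g k

lemma discreteAntideriv_zero (g : ℤ → G) : discreteAntideriv g 0 = 0 := by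
  simp [discreteAntideriv]

lemma discreteAntideriv_sub_sub_one (g : ℤ → G) (n : ℤ) :
    discreteAntideriv g n - discreteAntideriv g (n - 1) = g n := by
  unfold discreteAntideriv
  rcases lt_or_ge 0 n with hn | hn
  · rw [← insert_Ioc_sub_one_right_eq_Ioc hn, sum_insert (by simp),
      Ioc_eq_empty_of_le hn.le, Ioc_eq_empty_of_le (by omega : 0 ≤ n - 1)]
    abel
  · rw [← insert_Ioc_left_eq_Ioc_sub_one hn, sum_insert left_notMem_Ioc,
      Ioc_eq_empty_of_le hn, Ioc_eq_empty_of_le (by omega : n - 1 ≤ 0)]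
    abel

lemma eq_of_sub_sub_one_eq {f f' : ℤ → G} (h₀ : f 0 = f' 0)
    (h : ∀ n, f n - f (n - 1) = f' n - f' (n - 1)) : f = f' := by
  funext n
  induction n using Int.induction_on with
  | zero => exact h₀
  | succ n ih => simpa [ih] using h (n + 1)
  | pred n ih => simpa [ih] using h (-n)

theorem exists_potential_of_closed (a b : ℤ × ℤ → G)
    (hclosed : ∀ x y, a (x, y) - a (x, y - 1) = b (x, y) - b (x - 1, y)) :
    ∃ F : ℤ × ℤ → G, (∀ x y, F (x, y) - F (x - 1, y) = a (x, y)) ∧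
      ∀ x y, F (x, y) - F (x, y - 1) = b (x, y) := by
  -- `F` integrates `b` up the column `x = 0`, then `a` along the row.
  set A : ℤ → ℤ → G := fun y => discreteAntideriv fun x => a (x, y)
  have hA : ∀ y, (fun x => A y x - A (y - 1) x) = fun x => b (x, y) - b (0, y) := by
    intro y
    refine eq_of_sub_sub_one_eq (by simp [A, discreteAntideriv_zero]) fun x => ?_
    have := hclosed x y
    simp only [A]
    rw [sub_sub_sub_comm, discreteAntideriv_sub_sub_one, discreteAntideriv_sub_sub_one, this]
    abel
  refine ⟨fun p => discreteAntideriv (fun y => b (0, y)) p.2 + A p.2 p.1, fun x y => ?_,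
    fun x y => ?_⟩
  · simp [A, discreteAntideriv_sub_sub_one]
  · have := congrFun (hA y) x
    have h0 := discreteAntideriv_sub_sub_one (fun y => b (0, y)) y
    simp only at this h0 ⊢
    rw [add_sub_add_comm, h0, this]
    abel

end DiscretePoincare

/-- Faces of `ℤ²` are indexed by their lower-left corner, so that the edge `e` separates the
faces `e.1` and `e.1 - dualStep e.2`. -/
def dualStep (b : Bool) : ℤ × ℤ := if b then (0, 1) else (1, 0)

def IsFaceOf (f : ℤ × ℤ) (e : Edge) : Prop := f = e.1 ∨ f = e.1 - dualStep e.2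

def coboundary (F : ℤ × ℤ → ZMod 2) (e : Edge) : ZMod 2 := F e.1 - F (e.1 - dualStep e.2)

lemma adm8_coboundary (F : ℤ × ℤ → ZMod 2) : Adm8 (coboundary F) := by
  rintro ⟨x, y⟩
  simp only [coboundary, dualStep, Prod.mk_sub_mk, if_true, if_false, Bool.false_eq_true, sub_zero]
  linear_combination (F (x, y) - F (x - 1, y - 1)) * (CharTwo.two_eq_zero : (2 : ZMod 2) = 0)

lemma exists_coboundary_eq {W : Edge → ZMod 2} (hW : Adm8 W) : ∃ F, coboundary F = W := by
  obtain ⟨F, hx, hy⟩ := exists_potential_of_closed (fun p => W (p, false)) (fun p => W (p, true))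
    fun x y => by
      have := hW (x, y)
      linear_combination
        this - (W ((x, y - 1), false) + W ((x, y), true)) * (CharTwo.two_eq_zero : (2 : ZMod 2) = 0)
  refine ⟨F, funext fun ⟨⟨x, y⟩, b⟩ => ?_⟩
  cases b
  · simpa [coboundary, dualStep] using hx x y
  · simpa [coboundary, dualStep] using hy x y

lemma coboundary_congr {F F' : ℤ × ℤ → ZMod 2} {e : Edge} (h : ∀ f, IsFaceOf f e → F f = F' f) :
    coboundary F e = coboundary F' e := by
  rw [coboundary, coboundary, h _ (.inl rfl), h _ (.inr rfl)]

lemma eDist_lt_two {x y : ℤ × ℤ} (h₁ : |x.1 - y.1| ≤ 1) (h₂ : |x.2 - y.2| ≤ 1) :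
    eDist x y < 2 := by
  have h₁' : ((x.1 - y.1 : ℤ) : ℝ) ^ 2 ≤ 1 := by exact_mod_cast sq_le_one_iff_abs_le_one _ |>.mpr h₁
  have h₂' : ((x.2 - y.2 : ℤ) : ℝ) ^ 2 ≤ 1 := by exact_mod_cast sq_le_one_iff_abs_le_one _ |>.mpr h₂
  rw [eDist, Real.sqrt_lt' two_pos]
  linarith

lemma IsFaceOf.corner_sub_mem {f : ℤ × ℤ} {e : Edge} (h : IsFaceOf f e) :
    (e.1.1 - f.1 ∈ Set.Icc 0 1) ∧ (e.1.2 - f.2 ∈ Set.Icc 0 1) := by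
  obtain ⟨⟨x, y⟩, _ | _⟩ := e <;> rcases h with rfl | rfl <;> simp [dualStep]

lemma eDist_lt_two_of_isFaceOf {f : ℤ × ℤ} {e₁ e₂ : Edge} (h₁ : IsFaceOf f e₁)
    (h₂ : IsFaceOf f e₂) : eDist e₁.1 e₂.1 < 2 := by
  obtain ⟨⟨hx₁, hx₁'⟩, hy₁, hy₁'⟩ := h₁.corner_sub_mem
  obtain ⟨⟨hx₂, hx₂'⟩, hy₂, hy₂'⟩ := h₂.corner_sub_mem
  exact eDist_lt_two (abs_le.mpr ⟨by omega, by omega⟩) (abs_le.mpr ⟨by omega, by omega⟩)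

/-- The eight-vertex edge-coloring shift has strong specification with
constant `M = 2`: any two admissible edge patterns on sets of edges at
Euclidean distance `≥ 2` extend to a common globally admissible configuration. -/
theorem eightVertex_strongSpec (E₁ E₂ : Set Edge)
    (hd : ∀ e₁ ∈ E₁, ∀ e₂ ∈ E₂, ∀ x ∈ edgeEnds e₁, ∀ y ∈ edgeEnds e₂,
      (2 : ℝ) ≤ eDist x y)
    (W₁ W₂ : Edge → ZMod 2) (h₁ : Adm8 W₁) (h₂ : Adm8 W₂) :
    ∃ W, Adm8 W ∧ (∀ e ∈ E₁, W e = W₁ e) ∧ (∀ e ∈ E₂, W e = W₂ e) := by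
  classical
  obtain ⟨F₁, rfl⟩ := exists_coboundary_eq h₁
  obtain ⟨F₂, rfl⟩ := exists_coboundary_eq h₂
  let F f := if ∃ e ∈ E₂, IsFaceOf f e then F₂ f else F₁ f
  refine ⟨coboundary F, adm8_coboundary F, fun e he => coboundary_congr fun f hf => if_neg ?_,
    fun e he => coboundary_congr fun f hf => if_pos ⟨e, he, hf⟩⟩
  rintro ⟨e₂, he₂, hf₂⟩
  exact (eDist_lt_two_of_isFaceOf hf hf₂).not_ge
    (hd e he e₂ he₂ e.1 (Set.mem_insert _ _) e₂.1 (Set.mem_insert _ _))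
end

section
/- Let B ⊆ S_p^{Z_{2×2}} be rectangle-extendable. If there exists N ≥ 2 such that the horizontal transition matrix H_N(B) (or the vertical one V_N(B)) is not primitive, then Σ(B) is not topologically mixing. -/
open scoped Classical

/-- `Σ(B)` is topologically mixing. -/
def Mixing {p : ℕ} (B : Set (Pat p)) : Prop :=
  ∀ R₁ R₂ : Set (ℤ × ℤ), R₁.Finite → R₂.Finite →
    ∃ M : ℝ, ∀ v : ℤ × ℤ,
      (∀ x ∈ R₁, ∀ y ∈ R₂, M ≤ eDist x (y.1 + v.1, y.2 + v.2)) →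
      ∀ W₁ W₂ : ℤ × ℤ → Fin p, Glob B W₁ → Glob B W₂ →
        ∃ W, Glob B W ∧ (∀ x ∈ R₁, W x = W₁ x) ∧
          (∀ y ∈ R₂, W (y.1 + v.1, y.2 + v.2) = W₂ (y.1 + v.1, y.2 + v.2))


/-! ### Auxiliary lemmas -/

lemma pow_walk {ι : Type*} [Fintype ι] [DecidableEq ι] (A : Matrix ι ι ℕ)
    (m : ℕ) (f : ℕ → ι) (hf : ∀ k < m, A (f k) (f (k+1)) ≠ 0) :
    1 ≤ (A ^ m) (f 0) (f m) := by
  induction m with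
  | zero => simp [Matrix.one_apply]
  | succ m ih =>
    have h1 : 1 ≤ (A ^ m) (f 0) (f m) := ih (fun k hk => hf k (Nat.lt_succ_of_lt hk))
    have h2 : 1 ≤ A (f m) (f (m+1)) := Nat.one_le_iff_ne_zero.2 (hf m (Nat.lt_succ_self m))
    calc (1:ℕ) = 1 * 1 := rfl
      _ ≤ (A ^ m) (f 0) (f m) * A (f m) (f (m+1)) := Nat.mul_le_mul h1 h2
      _ ≤ ∑ j, (A ^ m) (f 0) j * A j (f (m+1)) :=
          Finset.single_le_sum (f := fun j => (A ^ m) (f 0) j * A j (f (m+1)))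
            (fun j _ => Nat.zero_le _) (Finset.mem_univ (f m))
      _ = (A ^ (m+1)) (f 0) (f (m+1)) := by rw [pow_succ, Matrix.mul_apply]

/-- From an admissible `2×N` strip, build a global configuration carrying it
in columns `0` and `1`. -/
lemma strip_glob {p N : ℕ} (B : Set (Pat p)) (hre : RectExt B)
    (hN : 2 ≤ N) (c c' : Fin N → Fin p) (h : HAdm B N c c') :
    ∃ W, Glob B W ∧ (∀ b : Fin N, W (0, (b:ℕ)) = c b ∧ W (1, (b:ℕ)) = c' b) := by
  have hNpos : 0 < N := by omega
  set U : ℤ × ℤ → Fin p :=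
    fun x => (if x.1 = 0 then c else c') ⟨x.2.toNat % N, Nat.mod_lt _ hNpos⟩ with hU
  have hadm : AdmOn B (rect 2 N (0, 0)) U := by
    intro v hv
    have h00 : (v.1, v.2) ∈ rect 2 N (0, 0) := hv ⟨0, 0, by simp⟩
    have h11 : (v.1 + 1, v.2 + 1) ∈ rect 2 N (0, 0) := hv ⟨1, 1, by simp⟩
    obtain ⟨a, b, ha, hb, heq⟩ := h00
    obtain ⟨a', b', ha', hb', heq'⟩ := h11
    have hv1 : v.1 = (a : ℤ) := by simpa using congrArg Prod.fst heq
    have hv2 : v.2 = (b : ℤ) := by simpa using congrArg Prod.snd heq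
    have hv1' : v.1 + 1 = (a' : ℤ) := by simpa using congrArg Prod.fst heq'
    have hv2' : v.2 + 1 = (b' : ℤ) := by simpa using congrArg Prod.snd heq'
    have ha0 : a = 0 := by omega
    have hb' : b' = b + 1 := by omega
    have hbN : b + 1 < N := by omega
    have hpat := h ⟨b, by omega⟩ ⟨b + 1, hbN⟩ rfl
    have : blk U v =
        (fun a b' : Fin 2 => (if a = 0 then c else c')
          (if b' = 0 then (⟨b, by omega⟩ : Fin N) else ⟨b + 1, hbN⟩)) := by
      funext x y
      have hx : ((x:ℕ) : ℤ) = if x = 0 then 0 else 1 := by fin_cases x <;> simp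
      have hy : ((y:ℕ) : ℤ) = if y = 0 then 0 else 1 := by fin_cases y <;> simp
      simp only [blk, hU, hv1, ha0, hv2, hx, hy]
      fin_cases x <;> fin_cases y <;>
        simp [Nat.mod_eq_of_lt, Nat.mod_eq_of_lt (show b < N by omega), hbN]
    rw [this]; exact hpat
  obtain ⟨W, hW, hWU⟩ := hre 2 N le_rfl hN U hadm
  refine ⟨W, hW, fun b => ?_⟩
  constructor
  · have : ((0:ℤ), ((b:ℕ):ℤ)) ∈ rect 2 N (0, 0) := ⟨0, b, by omega, b.isLt, by simp⟩
    rw [hWU _ this]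
    simp only [hU]
    norm_num
    congr 1
    exact Fin.ext (by simp [Nat.mod_eq_of_lt b.isLt])
  · have : ((1:ℤ), ((b:ℕ):ℤ)) ∈ rect 2 N (0, 0) := ⟨1, b, by omega, b.isLt, by simp⟩
    rw [hWU _ this]
    simp only [hU]
    norm_num
    congr 1
    exact Fin.ext (by simp [Nat.mod_eq_of_lt b.isLt])

/-- Translates of global configurations are global. -/
lemma glob_translate {p : ℕ} {B : Set (Pat p)} {W : ℤ × ℤ → Fin p} (hW : Glob B W)
    (t : ℤ × ℤ) : Glob B (fun x => W (x.1 + t.1, x.2 + t.2)) := by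
  intro v
  have : blk (fun x => W (x.1 + t.1, x.2 + t.2)) v = blk W (v.1 + t.1, v.2 + t.2) := by
    funext a b
    simp only [blk]
    ring_nf
  rw [this]; exact hW _

/-- Key lemma: mixing and rectangle-extendability force the horizontal
transition matrices to be primitive. -/
lemma primitive_of_mixing {p N : ℕ} (B : Set (Pat p)) (hre : RectExt B)
    (hN : 2 ≤ N) (hmix : Mixing B) : Primitive (Hmat B N) := by
  obtain ⟨M, hM⟩ := hmix (Set.range fun b : Fin N => ((0:ℤ), ((b:ℕ):ℤ)))
      (Set.range fun b : Fin N => ((1:ℤ), ((b:ℕ):ℤ)))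
      (Set.finite_range _) (Set.finite_range _)
  refine ⟨max 1 ⌈M⌉₊, le_max_left _ _, fun m hm i j => ?_⟩
  by_cases hE : (∀ k, Hmat B N i k = 0) ∨ (∀ k, Hmat B N k j = 0)
  · simp [Esat, hE]
  · have hm1 : 1 ≤ m := le_trans (le_max_left _ _) hm
    have hmM : (⌈M⌉₊ : ℝ) ≤ (m : ℝ) := by
      exact_mod_cast le_trans (le_max_right 1 ⌈M⌉₊) hm
    push_neg at hE
    obtain ⟨⟨c', hc'⟩, ⟨d', hd'⟩⟩ := hE
    have hic' : HAdm B N i c' := by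
      by_contra hcon; exact hc' (by simp [Hmat, hcon])
    have hd'j : HAdm B N d' j := by
      by_contra hcon; exact hd' (by simp [Hmat, hcon])
    obtain ⟨Wc, hWc, hWci⟩ := strip_glob B hre hN i c' hic'
    obtain ⟨Wd, hWd, hWdj⟩ := strip_glob B hre hN d' j hd'j
    -- translate Wd so that its column `1` lands at abscissa `m`
    set v : ℤ × ℤ := ((m:ℤ) - 1, 0) with hv
    set Wd' : ℤ × ℤ → Fin p := fun x => Wd (x.1 - ((m:ℤ) - 1), x.2 - 0) with hWd'
    have hWd'g : Glob B Wd' := glob_translate hWd (-( (m:ℤ) - 1), 0)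
    have hdist : ∀ x ∈ (Set.range fun b : Fin N => ((0:ℤ), ((b:ℕ):ℤ))),
        ∀ y ∈ (Set.range fun b : Fin N => ((1:ℤ), ((b:ℕ):ℤ))),
        M ≤ eDist x (y.1 + v.1, y.2 + v.2) := by
      rintro x ⟨b, rfl⟩ y ⟨b', rfl⟩
      have h1 : M ≤ (m : ℝ) := le_trans (Nat.le_ceil M) hmM
      refine le_trans h1 ?_
      have : ((0:ℤ) - (1 + ((m:ℤ) - 1)) : ℤ) = -(m:ℤ) := by ring
      simp only [eDist]
      have hsq : ((m:ℝ)) = Real.sqrt (((m:ℝ))^2) := by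
        rw [Real.sqrt_sq (by positivity)]
      rw [hsq]
      apply Real.sqrt_le_sqrt
      have h2 : ((((0:ℤ), ((b:ℕ):ℤ)).1 - (((1:ℤ), ((b':ℕ):ℤ)).1 + v.1) : ℤ) : ℝ)^2
          = (m:ℝ)^2 := by
        simp only [hv]
        push_cast
        ring
      rw [h2]
      nlinarith [sq_nonneg ((((((0:ℤ), ((b:ℕ):ℤ)).2 - (((1:ℤ), ((b':ℕ):ℤ)).2 + v.2)) : ℤ)):ℝ)]
    obtain ⟨W, hWg, hW1, hW2⟩ := hM v hdist Wc Wd' hWc hWd'g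
    -- the walk of columns of `W`
    set f : ℕ → (Fin N → Fin p) := fun t b => W ((t:ℤ), ((b:ℕ):ℤ)) with hf
    have hf0 : f 0 = i := by
      funext b
      have := hW1 _ ⟨b, rfl⟩
      simp only [hf]
      rw [show ((0:ℕ):ℤ) = (0:ℤ) by norm_num, this]
      exact (hWci b).1
    have hfm : f m = j := by
      funext b
      have h2 := hW2 _ ⟨b, rfl⟩
      simp only [hv] at h2
      have hpt : ((1:ℤ) + ((m:ℤ) - 1), ((b:ℕ):ℤ) + 0) = ((m:ℤ), ((b:ℕ):ℤ)) := by
        rw [Prod.mk.injEq]; constructor <;> ring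
      rw [hpt] at h2
      simp only [hf]
      rw [h2]
      simp only [hWd']
      have : ((m:ℤ) - ((m:ℤ) - 1), ((b:ℕ):ℤ) - 0) = ((1:ℤ), ((b:ℕ):ℤ)) := by
        rw [Prod.mk.injEq]; constructor <;> ring
      rw [this]
      exact (hWdj b).2
    have hedge : ∀ t < m, Hmat B N (f t) (f (t+1)) ≠ 0 := by
      intro t _
      have hH : HAdm B N (f t) (f (t+1)) := by
        intro k k' hkk'
        have hblk := hWg ((t:ℤ), ((k:ℕ):ℤ))
        have : (fun a b : Fin 2 => (if a = 0 then f t else f (t+1))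
            (if b = 0 then k else k')) = blk W ((t:ℤ), ((k:ℕ):ℤ)) := by
          funext x y
          have hx : ((x:ℕ) : ℤ) = if x = 0 then 0 else 1 := by fin_cases x <;> simp
          have hy : ((y:ℕ) : ℤ) = if y = 0 then 0 else 1 := by fin_cases y <;> simp
          simp only [blk, hx, hy, hf]
          fin_cases x <;> fin_cases y <;> simp [hkk']
        rw [this]; exact hblk
      simp [Hmat, hH]
    have hpow := pow_walk (Hmat B N) m f hedge
    rw [hf0, hfm] at hpow
    calc Esat (Hmat B N) i j ≤ 1 := by
          simp only [Esat]; split <;> omega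
      _ ≤ (Hmat B N ^ m) i j := hpow

/-! ### Coordinate-swap transport -/

/-- Transposed pattern set. -/
def Bsw {p : ℕ} (B : Set (Pat p)) : Set (Pat p) := {P | (fun a b => P b a) ∈ B}

lemma blk_swap {p : ℕ} (W : ℤ × ℤ → Fin p) (v : ℤ × ℤ) :
    (fun a b => blk (fun x => W (x.2, x.1)) v b a) = blk W (v.2, v.1) := by
  funext a b; rfl

lemma glob_swap {p : ℕ} {B : Set (Pat p)} {W : ℤ × ℤ → Fin p} (hW : Glob B W) :
    Glob (Bsw B) (fun x => W (x.2, x.1)) :=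
  fun v => hW (v.2, v.1)

lemma sqr_swap {v x : ℤ × ℤ} (hx : x ∈ sqr (v.2, v.1)) : (x.2, x.1) ∈ sqr v := by
  obtain ⟨a, b, rfl⟩ := hx
  exact ⟨b, a, rfl⟩

lemma rect_swap {m n : ℕ} {x : ℤ × ℤ} (hx : (x.2, x.1) ∈ rect n m (0, 0)) :
    x ∈ rect m n (0, 0) := by
  obtain ⟨a, b, ha, hb, heq⟩ := hx
  have h1 : x.2 = 0 + (a:ℤ) := congrArg Prod.fst heq
  have h2 : x.1 = 0 + (b:ℤ) := congrArg Prod.snd heq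
  exact ⟨b, a, hb, ha, by rw [Prod.ext_iff]; exact ⟨h2, h1⟩⟩

lemma rectext_swap {p : ℕ} {B : Set (Pat p)} (hre : RectExt B) : RectExt (Bsw B) := by
  intro m n hm hn U hU
  have hU' : AdmOn B (rect n m (0, 0)) (fun x => U (x.2, x.1)) := by
    intro v hv
    have hsub : sqr (v.2, v.1) ⊆ rect m n (0, 0) := fun x hx =>
      rect_swap (hv (sqr_swap hx))
    exact hU _ hsub
  obtain ⟨W, hWg, hWU⟩ := hre n m hn hm _ hU'
  refine ⟨fun x => W (x.2, x.1), glob_swap hWg, fun x hx => ?_⟩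
  exact hWU _ (by obtain ⟨a, b, ha, hb, rfl⟩ := hx; exact ⟨b, a, hb, ha, rfl⟩)

lemma eDist_swap (x y : ℤ × ℤ) : eDist (x.2, x.1) (y.2, y.1) = eDist x y := by
  simp only [eDist]; rw [add_comm]

lemma mixing_swap {p : ℕ} {B : Set (Pat p)} (hmix : Mixing B) : Mixing (Bsw B) := by
  intro R₁ R₂ h1 h2
  obtain ⟨M, hM⟩ := hmix (Prod.swap '' R₁) (Prod.swap '' R₂) (h1.image _) (h2.image _)
  refine ⟨M, fun v hdist W₁ W₂ hW₁ hW₂ => ?_⟩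
  have hdist' : ∀ x ∈ Prod.swap '' R₁, ∀ y ∈ Prod.swap '' R₂,
      M ≤ eDist x (y.1 + (v.2, v.1).1, y.2 + (v.2, v.1).2) := by
    rintro _ ⟨x, hx, rfl⟩ _ ⟨y, hy, rfl⟩
    have := hdist x hx y hy
    have he : eDist (Prod.swap x) ((Prod.swap y).1 + v.2, (Prod.swap y).2 + v.1)
        = eDist x (y.1 + v.1, y.2 + v.2) := by
      rw [← eDist_swap x (y.1 + v.1, y.2 + v.2)]
      rfl
    rw [he]; exact this
  have hW₁' : Glob B (fun x => W₁ (x.2, x.1)) := fun u => hW₁ (u.2, u.1)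
  have hW₂' : Glob B (fun x => W₂ (x.2, x.1)) := fun u => hW₂ (u.2, u.1)
  obtain ⟨W, hWg, hWa, hWb⟩ := hM (v.2, v.1) hdist' _ _ hW₁' hW₂'
  refine ⟨fun x => W (x.2, x.1), ?_, ?_, ?_⟩
  · exact fun u => hWg (u.2, u.1)
  · intro x hx
    exact hWa (x.2, x.1) ⟨x, hx, rfl⟩
  · intro y hy
    exact hWb (y.2, y.1) ⟨y, hy, rfl⟩

lemma vmat_eq_hmat_swap {p : ℕ} (B : Set (Pat p)) (n : ℕ) :
    Vmat B n = Hmat (Bsw B) n := by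
  funext r s
  have hiff : VAdm B n r s ↔ HAdm (Bsw B) n r s := Iff.rfl
  simp only [Vmat, Hmat]
  exact if_congr hiff rfl rfl

/-- If `B` is rectangle-extendable and some transition matrix `H_N(B)` or
`V_N(B)` (`N ≥ 2`) fails to be primitive, then `Σ(B)` is not topologically
mixing. -/
theorem not_mixing_of_not_primitive {p : ℕ} (hp : 2 ≤ p) (B : Set (Pat p))
    (hre : RectExt B) (N : ℕ) (hN : 2 ≤ N)
    (h : ¬ Primitive (Hmat B N) ∨ ¬ Primitive (Vmat B N)) :
    ¬ Mixing B := by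
  intro hmix
  rcases h with h | h
  · exact h (primitive_of_mixing B hre hN hmix)
  · rw [vmat_eq_hmat_swap] at h
    exact h (primitive_of_mixing (Bsw B) (rectext_swap hre) hN (mixing_swap hmix))
end

section
/- Starting from any B₀ = B ⊆ S_p^{Z_{2×2}} and iterating B_n = B_c(B_{n-1}) (removal of non-crisscross-extendable patterns), the sequence stabilizes after at most 2p² steps; the resulting set B* = ∩_{n=0}^{2p²} B_n is crisscross-extendable (B_c(B*) = B*) and satisfies Σ(B*) = Σ(B). -/
open scoped Classical

/-- The crisscross-reduction operator: keep those patterns of `C` that extend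
to a `C`-admissible pattern on the crisscross lattice `Z₊`. -/
def Bc {p : ℕ} (C : Set (Pat p)) : Set (Pat p) :=
  {b ∈ C | ∃ U : ℤ × ℤ → Fin p, AdmOn C Zplus U ∧ blk U (0, 0) = b}



namespace Criss
variable {p : ℕ}

def lcol (b : Pat p) : Fin 2 → Fin p := fun j => b 0 j
def rcol (b : Pat p) : Fin 2 → Fin p := fun j => b 1 j
def brow (b : Pat p) : Fin 2 → Fin p := fun i => b i 0
def trow (b : Pat p) : Fin 2 → Fin p := fun i => b i 1

def Ext (C : Set (Pat p)) : Set (Pat p) :=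
  {b ∈ C | (∃ r ∈ C, lcol r = rcol b) ∧ (∃ l ∈ C, rcol l = lcol b)
    ∧ (∃ u ∈ C, brow u = trow b) ∧ (∃ d ∈ C, trow d = brow b)}

lemma zplus_arith {x : ℤ × ℤ} (h : x ∈ Zplus) :
    (-1 ≤ x.1 ∧ x.1 ≤ 2 ∧ 0 ≤ x.2 ∧ x.2 ≤ 1) ∨
    (0 ≤ x.1 ∧ x.1 ≤ 1 ∧ -1 ≤ x.2 ∧ x.2 ≤ 2) := by
  rcases h with ((((h | h) | h) | h) | h) <;>
  · obtain ⟨a, b, rfl⟩ := h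
    have ha := a.is_lt
    have hb := b.is_lt
    simp only [Prod.fst, Prod.snd]
    omega

lemma sqr_sub_Zplus {v : ℤ × ℤ} (h : sqr v ⊆ Zplus) :
    v = (0, 0) ∨ v = (1, 0) ∨ v = (-1, 0) ∨ v = (0, 1) ∨ v = (0, -1) := by
  obtain ⟨v1, v2⟩ := v
  have c1 := zplus_arith (h (show ((v1, v2) : ℤ × ℤ) ∈ sqr (v1, v2) from ⟨0, 0, by simp⟩))
  have c2 := zplus_arith (h (show ((v1 + 1, v2) : ℤ × ℤ) ∈ sqr (v1, v2) from ⟨1, 0, by simp⟩))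
  have c3 := zplus_arith (h (show ((v1, v2 + 1) : ℤ × ℤ) ∈ sqr (v1, v2) from ⟨0, 1, by simp⟩))
  have c4 := zplus_arith (h (show ((v1 + 1, v2 + 1) : ℤ × ℤ) ∈ sqr (v1, v2) from ⟨1, 1, by simp⟩))
  simp only [Prod.mk.injEq]
  omega

lemma sqr00 : sqr (0, 0) ⊆ Zplus := fun _ hx => Or.inl (Or.inl (Or.inl (Or.inl hx)))
lemma sqr10 : sqr (1, 0) ⊆ Zplus := fun _ hx => Or.inl (Or.inl (Or.inl (Or.inr hx)))
lemma sqrm10 : sqr (-1, 0) ⊆ Zplus := fun _ hx => Or.inl (Or.inl (Or.inr hx))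
lemma sqr01 : sqr (0, 1) ⊆ Zplus := fun _ hx => Or.inl (Or.inr hx)
lemma sqr0m1 : sqr (0, -1) ⊆ Zplus := fun _ hx => Or.inr hx

def toFin2 (z : ℤ) : Fin 2 := if z = 1 then 1 else 0

def glue (b r l u d : Pat p) : ℤ × ℤ → Fin p := fun x =>
  if x.1 = -1 then l 0 (toFin2 x.2)
  else if x.1 = 2 then r 1 (toFin2 x.2)
  else if x.2 = -1 then d (toFin2 x.1) 0
  else if x.2 = 2 then u (toFin2 x.1) 1
  else b (toFin2 x.1) (toFin2 x.2)

lemma Bc_eq_Ext (C : Set (Pat p)) : Bc C = Ext C := by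
  ext b
  constructor
  · rintro ⟨hbC, U, hU, rfl⟩
    refine ⟨hbC, ⟨blk U (1, 0), hU _ sqr10, ?_⟩, ⟨blk U (-1, 0), hU _ sqrm10, ?_⟩,
      ⟨blk U (0, 1), hU _ sqr01, ?_⟩, ⟨blk U (0, -1), hU _ sqr0m1, ?_⟩⟩ <;>
    · funext j
      fin_cases j <;> norm_num [lcol, rcol, brow, trow, blk]
  · rintro ⟨hbC, ⟨r, hrC, hr⟩, ⟨l, hlC, hl⟩, ⟨u, huC, hu⟩, ⟨d, hdC, hd⟩⟩
    have hr' : ∀ j, r 0 j = b 1 j := fun j => congrFun hr j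
    have hl' : ∀ j, l 1 j = b 0 j := fun j => congrFun hl j
    have hu' : ∀ i, u i 0 = b i 1 := fun i => congrFun hu i
    have hd' : ∀ i, d i 1 = b i 0 := fun i => congrFun hd i
    refine ⟨hbC, glue b r l u d, ?_, ?_⟩
    · intro v hv
      rcases sqr_sub_Zplus hv with rfl | rfl | rfl | rfl | rfl
      · have : blk (glue b r l u d) (0, 0) = b := by
          funext a c; fin_cases a <;> fin_cases c <;> norm_num [blk, glue, toFin2]
        rw [this]; exact hbC
      · have : blk (glue b r l u d) (1, 0) = r := by
          funext a c; fin_cases a <;> fin_cases c <;>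
            norm_num [blk, glue, toFin2, hr']
        rw [this]; exact hrC
      · have : blk (glue b r l u d) (-1, 0) = l := by
          funext a c; fin_cases a <;> fin_cases c <;>
            norm_num [blk, glue, toFin2, hl']
        rw [this]; exact hlC
      · have : blk (glue b r l u d) (0, 1) = u := by
          funext a c; fin_cases a <;> fin_cases c <;>
            norm_num [blk, glue, toFin2, hu']
        rw [this]; exact huC
      · have : blk (glue b r l u d) (0, -1) = d := by
          funext a c; fin_cases a <;> fin_cases c <;>
            norm_num [blk, glue, toFin2, hd']
        rw [this]; exact hdC
    · funext a c; fin_cases a <;> fin_cases c <;> norm_num [blk, glue, toFin2]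

lemma Bc_subset (C : Set (Pat p)) : Bc C ⊆ C := fun _ hb => hb.1

def Ecol (C : Set (Pat p)) : Set (Fin 2 → Fin p) := (lcol '' C) ∩ (rcol '' C)
def Frow (C : Set (Pat p)) : Set (Fin 2 → Fin p) := (trow '' C) ∩ (brow '' C)

noncomputable def mu (C : Set (Pat p)) : ℕ := (Ecol C).ncard + (Frow C).ncard

lemma Ecol_Bc (C : Set (Pat p)) : Ecol (Bc C) ⊆ Ecol C := by
  rintro w ⟨⟨b, hb, rfl⟩, -⟩
  rw [Bc_eq_Ext] at hb
  obtain ⟨hbC, -, ⟨l, hlC, hl⟩, -, -⟩ := hb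
  exact ⟨⟨b, hbC, rfl⟩, ⟨l, hlC, hl⟩⟩

lemma rcol_mem_Ecol {C : Set (Pat p)} {b : Pat p} (hb : b ∈ Bc C) : rcol b ∈ Ecol C := by
  rw [Bc_eq_Ext] at hb
  obtain ⟨hbC, ⟨r, hrC, hr⟩, -, -, -⟩ := hb
  exact ⟨⟨r, hrC, hr⟩, ⟨b, hbC, rfl⟩⟩

lemma lcol_mem_Ecol {C : Set (Pat p)} {b : Pat p} (hb : b ∈ Bc C) : lcol b ∈ Ecol C := by
  rw [Bc_eq_Ext] at hb
  obtain ⟨hbC, -, ⟨l, hlC, hl⟩, -, -⟩ := hb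
  exact ⟨⟨b, hbC, rfl⟩, ⟨l, hlC, hl⟩⟩

lemma Frow_Bc (C : Set (Pat p)) : Frow (Bc C) ⊆ Frow C := by
  rintro w ⟨⟨b, hb, rfl⟩, -⟩
  rw [Bc_eq_Ext] at hb
  obtain ⟨hbC, -, -, ⟨u, huC, hu⟩, -⟩ := hb
  exact ⟨⟨b, hbC, rfl⟩, ⟨u, huC, hu⟩⟩

lemma trow_mem_Frow {C : Set (Pat p)} {b : Pat p} (hb : b ∈ Bc C) : trow b ∈ Frow C := by
  rw [Bc_eq_Ext] at hb
  obtain ⟨hbC, -, -, ⟨u, huC, hu⟩, -⟩ := hb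
  exact ⟨⟨b, hbC, rfl⟩, ⟨u, huC, hu⟩⟩

lemma brow_mem_Frow {C : Set (Pat p)} {b : Pat p} (hb : b ∈ Bc C) : brow b ∈ Frow C := by
  rw [Bc_eq_Ext] at hb
  obtain ⟨hbC, -, -, -, ⟨d, hdC, hd⟩⟩ := hb
  exact ⟨⟨d, hdC, hd⟩, ⟨b, hbC, rfl⟩⟩

lemma mu_drop {C : Set (Pat p)} (hne : Bc (Bc C) ≠ Bc C) : mu (Bc C) < mu C := by
  have hss : Bc (Bc C) ⊆ Bc C := Bc_subset _
  obtain ⟨b, hb, hbn⟩ : ∃ b, b ∈ Bc C ∧ b ∉ Bc (Bc C) := by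
    by_contra h
    push_neg at h
    exact hne (Set.Subset.antisymm hss (fun b hb => h b hb))
  have hEsub : Ecol (Bc C) ⊆ Ecol C := Ecol_Bc C
  have hFsub : Frow (Bc C) ⊆ Frow C := Frow_Bc C
  have hEfin : (Ecol C).Finite := Set.toFinite _
  have hFfin : (Frow C).Finite := Set.toFinite _
  rcases Classical.em (∃ r ∈ Bc C, lcol r = rcol b) with hR | hR
  rotate_left
  · have h1 : rcol b ∈ Ecol C := rcol_mem_Ecol hb
    have h2 : rcol b ∉ Ecol (Bc C) := by
      rintro ⟨⟨r, hrC, hr⟩, -⟩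
      exact hR ⟨r, hrC, hr⟩
    have : Ecol (Bc C) ⊂ Ecol C := ⟨hEsub, fun h => h2 (h h1)⟩
    exact Nat.add_lt_add_of_lt_of_le (Set.ncard_lt_ncard this hEfin)
      (Set.ncard_le_ncard hFsub hFfin)
  rcases Classical.em (∃ l ∈ Bc C, rcol l = lcol b) with hL | hL
  rotate_left
  · have h1 : lcol b ∈ Ecol C := lcol_mem_Ecol hb
    have h2 : lcol b ∉ Ecol (Bc C) := by
      rintro ⟨-, ⟨l, hlC, hl⟩⟩
      exact hL ⟨l, hlC, hl⟩
    have : Ecol (Bc C) ⊂ Ecol C := ⟨hEsub, fun h => h2 (h h1)⟩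
    exact Nat.add_lt_add_of_lt_of_le (Set.ncard_lt_ncard this hEfin)
      (Set.ncard_le_ncard hFsub hFfin)
  rcases Classical.em (∃ u ∈ Bc C, brow u = trow b) with hU | hU
  rotate_left
  · have h1 : trow b ∈ Frow C := trow_mem_Frow hb
    have h2 : trow b ∉ Frow (Bc C) := by
      rintro ⟨-, ⟨u, huC, hu⟩⟩
      exact hU ⟨u, huC, hu⟩
    have : Frow (Bc C) ⊂ Frow C := ⟨hFsub, fun h => h2 (h h1)⟩
    exact Nat.add_lt_add_of_le_of_lt (Set.ncard_le_ncard hEsub hEfin)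
      (Set.ncard_lt_ncard this hFfin)
  rcases Classical.em (∃ d ∈ Bc C, trow d = brow b) with hD | hD
  rotate_left
  · have h1 : brow b ∈ Frow C := brow_mem_Frow hb
    have h2 : brow b ∉ Frow (Bc C) := by
      rintro ⟨⟨d, hdC, hd⟩, -⟩
      exact hD ⟨d, hdC, hd⟩
    have : Frow (Bc C) ⊂ Frow C := ⟨hFsub, fun h => h2 (h h1)⟩
    exact Nat.add_lt_add_of_le_of_lt (Set.ncard_le_ncard hEsub hEfin)
      (Set.ncard_lt_ncard this hFfin)
  · exact (hbn (by rw [Bc_eq_Ext]; exact ⟨hb, hR, hL, hU, hD⟩)).elim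

lemma ncard_le_sq (s : Set (Fin 2 → Fin p)) : s.ncard ≤ p ^ 2 := by
  have h := Set.ncard_le_ncard (Set.subset_univ s) Set.finite_univ
  rwa [Set.ncard_univ, Nat.card_eq_fintype_card, Fintype.card_fun, Fintype.card_fin,
    Fintype.card_fin] at h

lemma ncard_univ_sq : (Set.univ : Set (Fin 2 → Fin p)).ncard = p ^ 2 := by
  rw [Set.ncard_univ, Nat.card_eq_fintype_card, Fintype.card_fun, Fintype.card_fin,
    Fintype.card_fin]

lemma Bc_eq_of_full {C : Set (Pat p)} (hE : Ecol C = Set.univ) (hF : Frow C = Set.univ) :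
    Bc C = C := by
  rw [Bc_eq_Ext]
  refine Set.Subset.antisymm (fun b hb => hb.1) (fun b hb => ?_)
  have h1 : rcol b ∈ Ecol C := hE ▸ Set.mem_univ _
  have h2 : lcol b ∈ Ecol C := hE ▸ Set.mem_univ _
  have h3 : trow b ∈ Frow C := hF ▸ Set.mem_univ _
  have h4 : brow b ∈ Frow C := hF ▸ Set.mem_univ _
  exact ⟨hb, h1.1, h2.2, h3.2, h4.1⟩

lemma mu_le (C : Set (Pat p)) : mu C ≤ 2 * p ^ 2 := by
  have h1 := ncard_le_sq (Ecol C)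
  have h2 := ncard_le_sq (Frow C)
  unfold mu
  omega

lemma Bc_eq_of_mu_eq {C : Set (Pat p)} (h : mu C = 2 * p ^ 2) : Bc C = C := by
  have h1 := ncard_le_sq (Ecol C)
  have h2 := ncard_le_sq (Frow C)
  have h' : (Ecol C).ncard + (Frow C).ncard = 2 * p ^ 2 := h
  have hE : Ecol C = Set.univ :=
    Set.eq_of_subset_of_ncard_le (Set.subset_univ _)
      (by rw [ncard_univ_sq]; omega) (Set.toFinite _)
  have hF : Frow C = Set.univ :=
    Set.eq_of_subset_of_ncard_le (Set.subset_univ _)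
      (by rw [ncard_univ_sq]; omega) (Set.toFinite _)
  exact Bc_eq_of_full hE hF

lemma iter_subset (B : Set (Pat p)) (n k : ℕ) : Bc^[n + k] B ⊆ Bc^[n] B := by
  induction k with
  | zero => exact subset_rfl
  | succ k ih =>
    rw [← Nat.add_assoc, Function.iterate_succ_apply']
    exact (Bc_subset _).trans ih

lemma iter_stab (B : Set (Pat p)) {n : ℕ} (h : Bc^[n + 1] B = Bc^[n] B) (k : ℕ) :
    Bc^[n + k] B = Bc^[n] B := by
  induction k with
  | zero => rfl
  | succ k ih =>
    rw [← Nat.add_assoc, Function.iterate_succ_apply', ih]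
    have h' := h
    rwa [Function.iterate_succ_apply'] at h'

lemma stab (B : Set (Pat p)) : Bc (Bc^[2 * p ^ 2] B) = Bc^[2 * p ^ 2] B := by
  set N := 2 * p ^ 2 with hN
  by_contra hcon
  have hstrict : ∀ n, n ≤ N → Bc^[n + 1] B ≠ Bc^[n] B := by
    intro n hn heq
    have h1 : Bc^[n + (N - n)] B = Bc^[n] B := iter_stab B heq _
    have h2 : Bc^[n + (N + 1 - n)] B = Bc^[n] B := iter_stab B heq _
    rw [show n + (N - n) = N by omega] at h1
    rw [show n + (N + 1 - n) = N + 1 by omega] at h2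
    apply hcon
    rw [← Function.iterate_succ_apply' Bc N B, h2]
    exact h1.symm
  have hmu : ∀ n, n ≤ N → mu (Bc^[n] B) + n ≤ mu B := by
    intro n hn
    induction n with
    | zero => simp
    | succ n ih =>
      have h1 : mu (Bc^[n + 1] B) < mu (Bc^[n] B) := by
        rw [Function.iterate_succ_apply']
        refine mu_drop ?_
        rw [← Function.iterate_succ_apply' Bc n B, ← Function.iterate_succ_apply' Bc (n + 1) B]
        exact hstrict (n + 1) hn
      have := ih (Nat.le_of_succ_le hn)
      omega
  have hfin := hmu N le_rfl
  have hmuB : mu B = N := le_antisymm (mu_le B) (by omega)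
  exact hstrict 0 (by omega) (by simpa using Bc_eq_of_mu_eq hmuB)

lemma glob_Bc {B : Set (Pat p)} {W : ℤ × ℤ → Fin p} (h : Glob B W) : Glob (Bc B) W := by
  intro v
  refine ⟨h v, fun x => W (v.1 + x.1, v.2 + x.2), fun u _ => ?_, ?_⟩
  · have : blk (fun x => W (v.1 + x.1, v.2 + x.2)) u = blk W (v.1 + u.1, v.2 + u.2) := by
      funext a c
      simp only [blk]
      ring_nf
    rw [this]; exact h _
  · funext a c
    simp [blk]

lemma glob_iter {B : Set (Pat p)} {W : ℤ × ℤ → Fin p} (h : Glob B W) (n : ℕ) :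
    Glob (Bc^[n] B) W := by
  induction n with
  | zero => exact h
  | succ n ih =>
    rw [Function.iterate_succ_apply']
    exact glob_Bc ih

end Criss

/-- Iterating the crisscross reduction `B_n = B_c(B_{n-1})` stabilizes after at
most `2p²` steps: `B* = ⋂_{n=0}^{2p²} B_n` satisfies `B_c(B*) = B*` and
`Σ(B*) = Σ(B)`. -/
theorem crisscross_iteration_stabilizes {p : ℕ} (hp : 2 ≤ p) (B : Set (Pat p)) :
    Bc (⋂ n ∈ Finset.range (2 * p ^ 2 + 1), Bc^[n] B) =
      (⋂ n ∈ Finset.range (2 * p ^ 2 + 1), Bc^[n] B) ∧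
    (∀ W : ℤ × ℤ → Fin p,
      Glob (⋂ n ∈ Finset.range (2 * p ^ 2 + 1), Bc^[n] B) W ↔ Glob B W) := by
  have hstar : (⋂ n ∈ Finset.range (2 * p ^ 2 + 1), Bc^[n] B) = Bc^[2 * p ^ 2] B := by
    apply Set.Subset.antisymm
    · exact Set.biInter_subset_of_mem (Finset.self_mem_range_succ _)
    · intro x hx
      simp only [Set.mem_iInter]
      intro n hn
      have hn' : n ≤ 2 * p ^ 2 := by
        simpa [Nat.lt_succ_iff] using Finset.mem_range.mp hn
      have := Criss.iter_subset B n (2 * p ^ 2 - n)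
      rw [show n + (2 * p ^ 2 - n) = 2 * p ^ 2 by omega] at this
      exact this hx
  constructor
  · rw [hstar]
    exact Criss.stab B
  · intro W
    constructor
    · intro h v
      have hsub : Bc^[2 * p ^ 2] B ⊆ B := by
        have := Criss.iter_subset B 0 (2 * p ^ 2)
        simpa using this
      have := h v
      rw [hstar] at this
      exact hsub this
    · intro h
      rw [hstar]
      exact Criss.glob_iter h (2 * p ^ 2)
end
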